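/- arXiv:2301.11602 — 11 statements merged into one kernel-verified Lean document; each statement's English description precedes it below -/
import Mathlib

section
/- Let d ≥ 1 and let L be the (d+2)×(d+2) real matrix with L_{ii} = d+1 and L_{ij} = (-1)^{i+j-1} for i ≠ j. Then every (d+1)-element subset of the columns of L is linearly independent. -/
open Matrix

/-- The `d`-th Laplacian matrix of the boundary of the `(d+1)`-simplex:
`L_{ii} = d+1` and `L_{ij} = (-1)^{i+j-1}` for `i ≠ j` (1-indexed; here 0-indexed,
so the sign is `(-1)^{i+j+1}`). -/
def lap (d : ℕ) : Matrix (Fin (d+2)) (Fin (d+2)) ℝ :=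
  Matrix.of fun i j => if i = j then (d+1 : ℝ) else (-1 : ℝ)^((i:ℕ)+(j:ℕ)+1)

/-- for `d ≥ 1`, every `(d+1)`-element subset of the columns of `L`
is linearly independent (the column of index `j` is the vector `(lap d)ᵀ j`). -/
theorem stmt2 (d : ℕ) (hd : 1 ≤ d) (s : Finset (Fin (d+2))) (hs : s.card = d + 1) :
    LinearIndependent ℝ (fun j : {x // x ∈ s} => (lap d)ᵀ (j : Fin (d+2))) := by
  rw [Fintype.linearIndependent_iff]
  intro g hg
  set c : Fin (d+2) → ℝ := fun i => if h : i ∈ s then g ⟨i, h⟩ else 0 with hc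
  have hrow : ∀ i : Fin (d+2), ∑ j, lap d i j * c j = 0 := by
    intro i
    have h0 := congrFun hg i
    simp only [Finset.sum_apply, Pi.smul_apply, Pi.zero_apply, smul_eq_mul,
      Matrix.transpose_apply] at h0
    calc ∑ j, lap d i j * c j = ∑ j ∈ s, lap d i j * c j := by
          rw [← Finset.sum_subset (Finset.subset_univ s)]
          intro x _ hx
          simp [hc, hx]
      _ = ∑ j : {x // x ∈ s}, g j * lap d i (j : Fin (d+2)) := by
          rw [← Finset.sum_attach s (fun j => lap d i j * c j)]
          refine Finset.sum_congr rfl fun j _ => ?_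
          simp [hc, j.2, mul_comm]
      _ = 0 := h0
  set S : ℝ := ∑ j : Fin (d+2), (-1 : ℝ)^(j:ℕ) * c j with hS
  have key : ∀ i : Fin (d+2), ((d:ℝ)+2) * c i = (-1 : ℝ)^(i:ℕ) * S := by
    intro i
    have h1 : ∑ j : Fin (d+2), (lap d i j + (-1:ℝ)^((i:ℕ)+(j:ℕ))) * c j
        = ((d:ℝ)+2) * c i := by
      rw [Finset.sum_eq_single i]
      · have : ((-1:ℝ))^((i:ℕ)+(i:ℕ)) = 1 := by
          rw [← two_mul, pow_mul]; norm_num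
        have hlii : lap d i i = (d:ℝ)+1 := by simp [lap]
        rw [hlii, this]; ring
      · intro j _ hj
        have hij : i ≠ j := fun h => hj h.symm
        have : lap d i j = (-1:ℝ)^((i:ℕ)+(j:ℕ)+1) := by simp [lap, hij]
        rw [this, pow_succ]
        ring
      · simp
    have h2 : ∑ j : Fin (d+2), (lap d i j + (-1:ℝ)^((i:ℕ)+(j:ℕ))) * c j
        = (∑ j, lap d i j * c j) + (-1:ℝ)^(i:ℕ) * S := by
      rw [hS, Finset.mul_sum, ← Finset.sum_add_distrib]
      refine Finset.sum_congr rfl fun j _ => ?_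
      rw [pow_add]; ring
    rw [h2, hrow i, zero_add] at h1
    linarith [h1]
  obtain ⟨k, hk⟩ : ∃ k : Fin (d+2), k ∉ s := by
    by_contra h
    push_neg at h
    have : s = Finset.univ := Finset.eq_univ_iff_forall.mpr h
    rw [this, Finset.card_univ, Fintype.card_fin] at hs
    omega
  have hck : c k = 0 := by simp [hc, hk]
  have hSz : S = 0 := by
    have := key k
    rw [hck, mul_zero] at this
    have hne : ((-1:ℝ))^(k:ℕ) ≠ 0 := by positivity
    exact (mul_eq_zero.mp this.symm).resolve_left hne
  have hden : ((d:ℝ)+2) ≠ 0 := by positivity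
  intro j
  have := key j
  rw [hSz, mul_zero] at this
  have hcj : c (j : Fin (d+2)) = 0 := by
    exact (mul_eq_zero.mp this).resolve_left hden
  simpa [hc, j.2] using hcj
end

section
/- Let d ≥ 1 be odd and let L be the (d+2)×(d+2) real matrix with L_{ii} = d+1 and L_{ij} = (-1)^{i+j-1} for i ≠ j. Then the all-ones vector does not lie in the column span of L; equivalently, the matrix obtained by appending the all-ones row to L has rank d+2. -/
/-!
With `v = ((-1)^i)ᵢ` we have `v ⬝ᵥ v = d + 2` and `L = (v ⬝ᵥ v) • 1 - v vᵀ`. Hence `vᵀ L = 0`, so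
every column of `L` is orthogonal to `v`, while `v ⬝ᵥ 1 = ∑ᵢ (-1)^i = 1` because `d + 2` is odd.
If moreover `L x = 0`, then `x` is a multiple of `v`, and `∑ᵢ xᵢ = 0` forces that multiple to
vanish, so the matrix `L` with the ones row appended has trivial kernel.
-/

open Matrix

/-- The matrix `L` with the all-ones row appended. -/
def lapOnes (d : ℕ) : Matrix ((Fin (d+2)) ⊕ Unit) (Fin (d+2)) ℝ :=
  Matrix.of fun i j => Sum.elim (fun r => lap d r j) (fun _ => (1 : ℝ)) i

namespace Matrix

variable {R n : Type*} [Fintype n] [DecidableEq n]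

/-- `(v ⬝ᵥ v)` times the orthogonal projection onto the hyperplane `v⊥`. -/
def perpMatrix [CommRing R] (v : n → R) : Matrix n n R :=
  (v ⬝ᵥ v) • 1 - vecMulVec v v

theorem vecMul_perpMatrix_self [CommRing R] (v : n → R) : v ᵥ* perpMatrix v = 0 := by
  rw [perpMatrix, vecMul_sub, vecMul_smul, vecMul_one, vecMul_vecMulVec, sub_self]

theorem smul_eq_of_perpMatrix_mulVec_eq_zero [CommRing R] {v x : n → R}
    (hx : perpMatrix v *ᵥ x = 0) : (v ⬝ᵥ v) • x = (v ⬝ᵥ x) • v := by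
  rw [perpMatrix, sub_mulVec, smul_mulVec, one_mulVec, vecMulVec_mulVec, sub_eq_zero] at hx
  simpa using hx

theorem perpMatrix_mulVec_ne_one [CommRing R] {v : n → R} (hv : ∑ i, v i ≠ 0) (c : n → R) :
    perpMatrix v *ᵥ c ≠ 1 := by
  intro hc
  have h := congrArg (v ⬝ᵥ ·) hc
  simp only [dotProduct_mulVec, vecMul_perpMatrix_self, zero_dotProduct] at h
  exact hv (by simpa [dotProduct] using h.symm)

theorem eq_zero_of_perpMatrix_mulVec_eq_zero [Field R] {v x : n → R} (hvv : v ⬝ᵥ v ≠ 0)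
    (hv : ∑ i, v i ≠ 0) (hx : perpMatrix v *ᵥ x = 0) (hsum : ∑ i, x i = 0) : x = 0 := by
  have hvx := smul_eq_of_perpMatrix_mulVec_eq_zero hx
  have hsum' := congrArg (∑ i, · i) hvx
  simp only [Pi.smul_apply, smul_eq_mul, ← Finset.mul_sum, hsum, mul_zero] at hsum'
  have : v ⬝ᵥ x = 0 := by simpa [hv] using hsum'.symm
  rw [this, zero_smul] at hvx
  exact (smul_eq_zero.mp hvx).resolve_left hvv

end Matrix

def signVec (n : ℕ) (i : Fin n) : ℝ := (-1) ^ (i : ℕ)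

theorem signVec_dotProduct_self (n : ℕ) : signVec n ⬝ᵥ signVec n = n := by
  simp [signVec, dotProduct, ← pow_add, ← two_mul, pow_mul]

theorem sum_signVec_of_odd {n : ℕ} (hn : Odd n) : ∑ i, signVec n i = 1 := by
  simp only [signVec]
  rw [Fin.sum_univ_eq_sum_range (fun i => (-1 : ℝ) ^ i), neg_one_geom_sum,
    if_neg (Nat.not_even_iff_odd.mpr hn)]

theorem lap_eq_perpMatrix (d : ℕ) : lap d = perpMatrix (signVec (d + 2)) := by
  ext i j
  rw [perpMatrix, signVec_dotProduct_self]
  by_cases h : i = j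
  · subst h
    simp only [lap, of_apply, ↓reduceIte, Matrix.sub_apply, Matrix.smul_apply, one_apply_eq,
      smul_eq_mul, mul_one, vecMulVec_apply, signVec, ← pow_add, ← two_mul, pow_mul, neg_one_sq,
      one_pow]
    push_cast
    ring
  · simp [lap, signVec, vecMulVec_apply, h, pow_succ, pow_add]

theorem lapOnes_eq_fromRows (d : ℕ) : lapOnes d = fromRows (lap d) (of fun _ _ => 1) := by
  ext (_ | _) _ <;> rfl

theorem sum_signVec_ne_zero {d : ℕ} (ho : Odd d) : ∑ i, signVec (d + 2) i ≠ 0 := by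
  rw [sum_signVec_of_odd (ho.add_even even_two)]
  exact one_ne_zero

theorem lap_mulVec_ne_one {d : ℕ} (ho : Odd d) (c : Fin (d + 2) → ℝ) : lap d *ᵥ c ≠ 1 := by
  rw [lap_eq_perpMatrix]
  exact perpMatrix_mulVec_ne_one (sum_signVec_ne_zero ho) c

theorem lapOnes_mulVecLin_injective {d : ℕ} (ho : Odd d) :
    Function.Injective (lapOnes d).mulVecLin := by
  rw [← LinearMap.ker_eq_bot, LinearMap.ker_eq_bot']
  intro x hx
  rw [mulVecLin_apply, lapOnes_eq_fromRows, fromRows_mulVec] at hx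
  have hlap : perpMatrix (signVec (d + 2)) *ᵥ x = 0 := by
    rw [← lap_eq_perpMatrix]
    exact funext fun i => congrFun hx (.inl i)
  have hx_sum : ∑ i, x i = 0 := by simpa [mulVec, dotProduct] using congrFun hx (.inr ())
  exact eq_zero_of_perpMatrix_mulVec_eq_zero (by rw [signVec_dotProduct_self]; positivity)
    (sum_signVec_ne_zero ho) hlap hx_sum

theorem stmt4_general (d : ℕ) (ho : Odd d) :
    (1 : Fin (d+2) → ℝ) ∉ Submodule.span ℝ (Set.range (lap d)ᵀ) ∧
    (lapOnes d).rank = d + 2 := by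
  constructor
  · change 1 ∉ Submodule.span ℝ (Set.range (lap d).col)
    rw [← range_mulVecLin]
    rintro ⟨c, hc⟩
    exact lap_mulVec_ne_one ho c hc
  · rw [rank, LinearMap.finrank_range_of_inj (lapOnes_mulVecLin_injective ho),
      Module.finrank_fin_fun]

/-- for odd `d ≥ 1`, the all-ones vector does not lie in the column
span of `L`; equivalently, appending the all-ones row to `L` gives a matrix of
rank `d+2`. -/
theorem stmt4 (d : ℕ) (hd : 1 ≤ d) (ho : Odd d) :
    (1 : Fin (d+2) → ℝ) ∉ Submodule.span ℝ (Set.range (lap d)ᵀ) ∧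
    (lapOnes d).rank = d + 2 :=
  stmt4_general d ho
end

section
/- Let Δ be a finite d-dimensional simplicial complex with H_d(Δ; ℚ) = 0. Then the d-th Laplacian polytope P_Δ^{(d)}, i.e., the convex hull of the columns of L_d(Δ) = ∂_d^T ∂_d in ℝ^{f_d(Δ)}, is a simplex of dimension f_d(Δ) − 1 (its f_d(Δ) columns are affinely independent). -/
open Matrix

variable (V : Type*) [Fintype V] [LinearOrder V]

/-- The boundary matrix `∂_d : C_d(Δ;ℚ) → C_{d-1}(Δ;ℚ)` of a simplicial complex `Δ`
(given as a finite set of finite faces on the linearly ordered vertex set `V`):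
rows are indexed by the `(d-1)`-faces (cardinality `d`), columns by the `d`-faces
(cardinality `d+1`); the entry for `σ = {j_1 < ⋯ < j_{d+1}}` and `τ = σ \ {j_k}`
is `(-1)^{k-1}`, i.e. `(-1)^{#{w ∈ σ : w < j_k}}`. -/
def bdryMat (Δ : Finset (Finset V)) (d : ℕ) :
    Matrix {τ // τ ∈ Δ.filter fun F => F.card = d}
      {σ // σ ∈ Δ.filter fun F => F.card = d + 1} ℚ :=
  Matrix.of fun τ σ =>
    ∑ v ∈ σ.1, if τ.1 = σ.1.erase v then (-1 : ℚ)^((σ.1.filter (· < v)).card) else 0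

/-! Over an ordered field `ker (Aᵀ A) = ker A`, so an injective `A` makes the square matrix
`Aᵀ A` nonsingular; its columns are then linearly, hence affinely, independent. -/

theorem Matrix.affineIndependent_col_transpose_mul_self {m n R : Type*} [Fintype m] [Fintype n]
    [Field R] [LinearOrder R] [IsStrictOrderedRing R] {A : Matrix m n R}
    (hA : LinearMap.ker A.mulVecLin = ⊥) : AffineIndependent R (Aᵀ * A).col := by
  have hinj : Function.Injective (Aᵀ * A).mulVec := by
    rw [← coe_mulVecLin, ← LinearMap.ker_eq_bot, ker_mulVecLin_transpose_mul_self, hA]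
  exact (mulVec_injective_iff.mp hinj).affineIndependent

theorem stmt6 (Δ : Finset (Finset V)) (d : ℕ)
    (hH : LinearMap.ker (bdryMat V Δ d).mulVecLin = ⊥) :
    AffineIndependent ℚ
      (fun σ : {σ // σ ∈ Δ.filter fun F => F.card = d + 1} =>
        ((bdryMat V Δ d)ᵀ * bdryMat V Δ d)ᵀ σ) :=
  affineIndependent_col_transpose_mul_self hH
end

section
/- Let d ≥ 1. The Laplacian polytope P_{∂σ_{d+1}}, the convex hull of the columns of the (d+2)×(d+2) matrix L with L_{ii} = d+1 and L_{ij} = (-1)^{i+j-1} for i ≠ j, has dimension d if d is even and dimension d+1 if d is odd. -/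
/-!
With `ε = ((-1)^i)ᵢ` we have `L = (d+2) I - ε εᵀ`, so `ker L = ℝ ε` and the columns of `L`
span a space of dimension `d + 1`. The affine hull of a set is its linear span when it contains `0`,
and a hyperplane of the span otherwise. For `d` odd, `∑ εᵢ = 1` and `L ε = 0` write `0` as an
affine combination of the columns; for `d` even, `∑ εᵢ = 0`, so every column has coordinate sum
`d + 2 ≠ 0` and `0` is not in their affine hull.
-/

open Matrix

section AffineSpan

variable {k V : Type*} [Field k] [AddCommGroup V] [Module k V] {s : Set V}

theorem vectorSpan_le_span (s : Set V) : vectorSpan k s ≤ Submodule.span k s := by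
  rw [vectorSpan_def, Submodule.span_le]
  rintro _ ⟨x, hx, y, hy, rfl⟩
  exact sub_mem (Submodule.subset_span hx) (Submodule.subset_span hy)

theorem vectorSpan_eq_span_of_zero_mem_affineSpan (h : (0 : V) ∈ affineSpan k s) :
    vectorSpan k s = Submodule.span k s := by
  refine le_antisymm (vectorSpan_le_span s) (Submodule.span_le.2 fun x hx => ?_)
  simpa [direction_affineSpan] using
    AffineSubspace.vsub_mem_direction (mem_affineSpan k hx) h

theorem finrank_vectorSpan_add_one_of_zero_notMem_affineSpan [FiniteDimensional k V]
    (hs : s.Nonempty) (h : (0 : V) ∉ affineSpan k s) :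
    Module.finrank k (vectorSpan k s) + 1 = Module.finrank k (Submodule.span k s) := by
  obtain ⟨p, hp⟩ := hs
  have hp_ne : p ≠ 0 := fun hp0 => h (hp0 ▸ mem_affineSpan k hp)
  have hp_notMem : p ∉ vectorSpan k s := fun hpv => h <| by
    rw [← direction_affineSpan] at hpv
    simpa using AffineSubspace.vadd_mem_of_mem_direction (neg_mem hpv) (mem_affineSpan k hp)
  have hsup : k ∙ p ⊔ vectorSpan k s = Submodule.span k s := by
    refine le_antisymm (sup_le ((Submodule.span_singleton_le_iff_mem _ _).2
      (Submodule.subset_span hp)) (vectorSpan_le_span s)) (Submodule.span_le.2 fun x hx => ?_)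
    rw [← add_sub_cancel p x]
    exact Submodule.add_mem_sup (Submodule.mem_span_singleton_self p)
      (vsub_mem_vectorSpan k hx hp)
  have hinf : k ∙ p ⊓ vectorSpan k s = ⊥ :=
    ((Submodule.disjoint_span_singleton' hp_ne).2 hp_notMem).symm.eq_bot
  have := Submodule.finrank_sup_add_finrank_inf_eq (k ∙ p) (vectorSpan k s)
  rw [hsup, hinf, finrank_bot, finrank_span_singleton hp_ne] at this
  omega

theorem zero_notMem_affineSpan_of_forall_eq (f : V →ₗ[k] k) {a : k} (ha : a ≠ 0)
    (h : ∀ x ∈ s, f x = a) : (0 : V) ∉ affineSpan k s := fun h0 =>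
  ha <| by simpa using (AffineMap.eqOn_affineSpan (f := f.toAffineMap)
    (g := AffineMap.const k V a) h h0).symm

end AffineSpan

def altSign (n : ℕ) (i : Fin n) : ℝ := (-1) ^ (i : ℕ)

theorem altSign_dotProduct_self (n : ℕ) : altSign n ⬝ᵥ altSign n = n := by
  simp [altSign, dotProduct, ← mul_pow]

theorem one_dotProduct_altSign (n : ℕ) : 1 ⬝ᵥ altSign n = if Even n then 0 else 1 := by
  rw [one_dotProduct]
  simp only [altSign]
  rw [Fin.sum_univ_eq_sum_range (fun i => (-1 : ℝ) ^ i)]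
  exact neg_one_geom_sum

theorem lap_eq (d : ℕ) :
    lap d = (d + 2 : ℝ) • 1 - vecMulVec (altSign (d + 2)) (altSign (d + 2)) := by
  ext i j
  by_cases hij : i = j
  · subst hij
    simp only [lap, of_apply, ↓reduceIte, Matrix.sub_apply, Matrix.smul_apply, one_apply_eq,
      smul_eq_mul, mul_one, vecMulVec_apply, altSign, ← pow_add, Even.neg_one_pow ⟨_, rfl⟩]
    ring
  · simp [lap, altSign, vecMulVec_apply, hij, pow_succ, ← pow_add]

theorem lap_mulVec (d : ℕ) (y : Fin (d + 2) → ℝ) :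
    lap d *ᵥ y = (d + 2 : ℝ) • y - (altSign (d + 2) ⬝ᵥ y) • altSign (d + 2) := by
  rw [lap_eq, sub_mulVec, smul_mulVec, one_mulVec, vecMulVec_mulVec, op_smul_eq_smul]

theorem lap_mulVec_altSign (d : ℕ) : lap d *ᵥ altSign (d + 2) = 0 := by
  rw [lap_mulVec, altSign_dotProduct_self]
  push_cast
  exact sub_self _

theorem ker_mulVecLin_lap (d : ℕ) :
    LinearMap.ker (lap d).mulVecLin = ℝ ∙ altSign (d + 2) := by
  refine le_antisymm (fun y hy => ?_)
    ((Submodule.span_singleton_le_iff_mem _ _).2 (lap_mulVec_altSign d))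
  rw [LinearMap.mem_ker, mulVecLin_apply, lap_mulVec, sub_eq_zero] at hy
  refine Submodule.mem_span_singleton.2 ⟨(altSign (d + 2) ⬝ᵥ y) / (d + 2), ?_⟩
  rw [div_eq_inv_mul, mul_smul, ← hy, inv_smul_smul₀ (by positivity)]

theorem finrank_span_col_lap (d : ℕ) :
    Module.finrank ℝ (Submodule.span ℝ (Set.range (lap d).col)) = d + 1 := by
  have hε : altSign (d + 2) ≠ 0 := fun h => by simpa [altSign] using congrFun h 0
  have := LinearMap.finrank_range_add_finrank_ker (lap d).mulVecLin
  rw [range_mulVecLin, ker_mulVecLin_lap, finrank_span_singleton hε,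
    Module.finrank_fin_fun] at this
  omega

theorem one_dotProduct_col_lap {d : ℕ} (hd : Even d) (j : Fin (d + 2)) :
    1 ⬝ᵥ (lap d).col j = d + 2 := by
  rw [← mulVec_single_one, lap_mulVec, dotProduct_sub, dotProduct_smul, dotProduct_smul,
    one_dotProduct_altSign, if_pos (hd.add even_two)]
  simp

theorem zero_mem_affineSpan_col_lap {d : ℕ} (hd : ¬Even d) :
    (0 : Fin (d + 2) → ℝ) ∈ affineSpan ℝ (Set.range (lap d).col) := by
  have hsum : ∑ j, altSign (d + 2) j = 1 := by
    rw [← one_dotProduct, one_dotProduct_altSign, if_neg (by simpa [Nat.even_add] using hd)]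
  have h := affineCombination_mem_affineSpan (s := Finset.univ) hsum (lap d).col
  have hcomb : ∑ j, altSign (d + 2) j • (lap d).col j = 0 := by
    have h0 := lap_mulVec_altSign d
    simp only [mulVec_eq_sum, op_smul_eq_smul] at h0
    exact h0
  rwa [Finset.affineCombination_eq_linear_combination _ _ _ hsum, hcomb] at h

theorem stmt7_general (d : ℕ) :
    Module.finrank ℝ (affineSpan ℝ (Set.range (lap d)ᵀ)).direction =
      if Even d then d else d + 1 := by
  change Module.finrank ℝ (affineSpan ℝ (Set.range (lap d).col)).direction = _
  rw [direction_affineSpan]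
  split_ifs with hd
  · have hconst : ∀ x ∈ Set.range (lap d).col, dotProductEquiv ℝ _ 1 x = d + 2 := by
      rintro _ ⟨j, rfl⟩
      exact one_dotProduct_col_lap hd j
    have h := finrank_vectorSpan_add_one_of_zero_notMem_affineSpan (Set.range_nonempty _)
      (zero_notMem_affineSpan_of_forall_eq _ (by positivity) hconst)
    rw [finrank_span_col_lap] at h
    omega
  · rw [vectorSpan_eq_span_of_zero_mem_affineSpan (zero_mem_affineSpan_col_lap hd),
      finrank_span_col_lap]

/-- for `d ≥ 1`, the Laplacian polytope `P = conv(columns of L)` has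
dimension `d` if `d` is even and `d+1` if `d` is odd (the dimension of a polytope
being the dimension of its affine hull, i.e. of its direction space). -/
theorem stmt7 (d : ℕ) (hd : 1 ≤ d) :
    Module.finrank ℝ (affineSpan ℝ (Set.range (lap d)ᵀ)).direction =
      if Even d then d else d + 1 :=
  stmt7_general d
end

section
/- Let d ≥ 1 and let L be the (d+2)×(d+2) matrix with L_{ii} = d+1 and L_{ij} = (-1)^{i+j-1} for i ≠ j. Then every column of L is a vertex of the polytope P = conv(columns of L); in particular P has exactly d+2 vertices. -/
open Matrix

lemma lap_off_le_one (d : ℕ) {i j : Fin (d+2)} (h : i ≠ j) : lap d i j ≤ 1 := by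
  simp only [lap, Matrix.of_apply, if_neg h]
  rcases Nat.even_or_odd ((i:ℕ)+(j:ℕ)+1) with he | ho
  · rw [he.neg_one_pow]
  · rw [ho.neg_one_pow]; norm_num

/-- for `d ≥ 1`, every column of `L` is a vertex of
`P = conv(columns of L)`: no column lies in the convex hull of the other columns,
and the columns are pairwise distinct; in particular `P` has exactly `d+2`
vertices. -/
theorem stmt8 (d : ℕ) (hd : 1 ≤ d) :
    (∀ j : Fin (d+2), (lap d)ᵀ j ∉ convexHull ℝ ((lap d)ᵀ '' {k | k ≠ j})) ∧
    Function.Injective (lap d)ᵀ := by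
  have h2 : (1:ℝ) ≤ (d:ℝ) := by exact_mod_cast hd
  constructor
  · intro j hmem
    have hsub : convexHull ℝ ((lap d)ᵀ '' {k | k ≠ j}) ⊆ {x : Fin (d+2) → ℝ | x j ≤ 1} := by
      apply convexHull_min
      · rintro x ⟨k, hk, rfl⟩
        exact lap_off_le_one d (Ne.symm hk)
      · exact convex_halfSpace_le (LinearMap.proj j : (Fin (d+2) → ℝ) →ₗ[ℝ] ℝ).isLinear 1
    have h1 : (lap d)ᵀ j j ≤ 1 := hsub hmem
    simp only [Matrix.transpose_apply, lap, Matrix.of_apply, if_pos rfl, if_true] at h1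
    linarith
  · intro a b hab
    by_contra hne
    have h1 : lap d a a = lap d a b := by
      simpa [Matrix.transpose_apply] using congrFun hab a
    have hle : lap d a b ≤ 1 := lap_off_le_one d hne
    rw [← h1] at hle
    simp only [lap, Matrix.of_apply, if_pos rfl, if_true] at hle
    linarith
end

section
/- Let d ≥ 2 be even and let b^{(ℓ)} ∈ ℝ^d (1 ≤ ℓ ≤ d+2) be defined by b^{(ℓ)}_k = d+1 if k = ℓ−2 and b^{(ℓ)}_k = (-1)^{k+ℓ-1} otherwise. Then the inequality Σ_{k=1}^d x_k ≤ d+2 is valid for conv(b^{(1)},...,b^{(d+2)}), with equality holding exactly for the points b^{(ℓ)} with 3 ≤ ℓ ≤ d+2. -/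
open Matrix

/-- The vertices `b^{(ℓ)} ∈ ℝ^d`, `1 ≤ ℓ ≤ d+2`, of the full-dimensional realization
of the `d`-th Laplacian polytope of `∂σ_{d+1}`: `b^{(ℓ)}_k = d+1` if `k = ℓ-2` and
`b^{(ℓ)}_k = (-1)^{k+ℓ-1}` otherwise (1-indexed; with the 0-indexing below the
condition reads `k+2 = ℓ` and the sign is `(-1)^{k+ℓ+1}`). -/
def bvec (d : ℕ) (ℓ : Fin (d+2)) : Fin d → ℝ := fun k =>
  if (k:ℕ) + 2 = (ℓ:ℕ) then (d+1 : ℝ) else (-1 : ℝ)^((k:ℕ)+(ℓ:ℕ)+1)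

lemma alt_sum (d m : ℕ) (he : Even d) : ∑ k : Fin d, (-1:ℝ)^((k:ℕ)+m) = 0 := by
  have : ∑ k : Fin d, (-1:ℝ)^((k:ℕ)+m) = (∑ k ∈ Finset.range d, (-1:ℝ)^k) * (-1)^m := by
    rw [Finset.sum_mul, ← Fin.sum_univ_eq_sum_range]
    simp [pow_add]
  rw [this, neg_one_geom_sum, if_pos he, zero_mul]

lemma bvec_eq (d : ℕ) (ℓ : Fin (d+2)) (k : Fin d) :
    bvec d ℓ k = (-1:ℝ)^((k:ℕ)+(ℓ:ℕ)+1) + (if (k:ℕ) + 2 = (ℓ:ℕ) then (d+2:ℝ) else 0) := by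
  unfold bvec
  by_cases h : (k:ℕ) + 2 = (ℓ:ℕ)
  · rw [if_pos h, if_pos h]
    have : (k:ℕ)+(ℓ:ℕ)+1 = 2*(k:ℕ) + 3 := by omega
    rw [this, pow_add, pow_mul]
    ring_nf
  · rw [if_neg h, if_neg h, add_zero]

lemma sum_bvec (d : ℕ) (he : Even d) (ℓ : Fin (d+2)) :
    ∑ k, bvec d ℓ k = if 2 ≤ (ℓ:ℕ) then (d+2:ℝ) else 0 := by
  have halt : ∑ k : Fin d, (-1:ℝ)^((k:ℕ)+(ℓ:ℕ)+1) = 0 := by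
    have := alt_sum d ((ℓ:ℕ)+1) he
    simpa [← add_assoc] using this
  simp only [bvec_eq, Finset.sum_add_distrib, halt, zero_add]
  by_cases h : 2 ≤ (ℓ:ℕ)
  · rw [if_pos h]
    have hlt : (ℓ:ℕ) - 2 < d := by have := ℓ.isLt; omega
    set j : Fin d := ⟨(ℓ:ℕ) - 2, hlt⟩
    have : ∀ k : Fin d, ((k:ℕ) + 2 = (ℓ:ℕ)) ↔ k = j := by
      intro k
      constructor
      · intro hk; apply Fin.ext; simp [j]; omega
      · rintro rfl; simp [j]; omega
    simp only [this]
    simp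
  · rw [if_neg h]
    have : ∀ k : Fin d, ¬((k:ℕ) + 2 = (ℓ:ℕ)) := by intro k; omega
    simp [this]

/-- for even `d ≥ 2`, the inequality `Σ_k x_k ≤ d+2` is valid on
`conv(b^{(1)},…,b^{(d+2)})`, with equality exactly for the points `b^{(ℓ)}` with
`3 ≤ ℓ ≤ d+2` (1-indexed, i.e. `2 ≤ (ℓ:ℕ)`). -/
theorem stmt11 (d : ℕ) (hd : 2 ≤ d) (he : Even d) :
    (∀ x ∈ convexHull ℝ (Set.range (bvec d)), ∑ k, x k ≤ d + 2) ∧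
    (∀ ℓ : Fin (d+2), (∑ k, bvec d ℓ k = d + 2) ↔ 2 ≤ (ℓ:ℕ)) := by
  constructor
  · intro x hx
    have hconv : Convex ℝ {x : Fin d → ℝ | ∑ k, x k ≤ (d:ℝ) + 2} := by
      apply convex_halfSpace_le
      exact ⟨fun a b => Finset.sum_add_distrib, fun c a => by
        simp [Finset.mul_sum]⟩
    have hsub : Set.range (bvec d) ⊆ {x : Fin d → ℝ | ∑ k, x k ≤ (d:ℝ) + 2} := by
      rintro _ ⟨ℓ, rfl⟩
      simp only [Set.mem_setOf_eq, sum_bvec d he ℓ]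
      split
      · exact le_rfl
      · positivity
    exact convexHull_min hsub hconv hx
  · intro ℓ
    rw [sum_bvec d he ℓ]
    by_cases h : 2 ≤ (ℓ:ℕ)
    · simp [h]
    · simp only [if_neg h]
      constructor
      · intro h0
        have hp : (0:ℝ) < d + 2 := by positivity
        exfalso; linarith
      · intro hh; exact absurd hh h
end

section
/- Let d ≥ 2 be even and let b^{(ℓ)} ∈ ℝ^d (1 ≤ ℓ ≤ d+2) be defined by b^{(ℓ)}_k = d+1 if k = ℓ−2 and b^{(ℓ)}_k = (-1)^{k+ℓ-1} otherwise. For 1 ≤ i < j ≤ d with i+j odd, the inequality x_i + x_j ≥ 0 is valid for conv(b^{(1)},...,b^{(d+2)}), with equality exactly for the points b^{(ℓ)} with ℓ ∈ [d+2] \ {i+2, j+2}. -/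
open Matrix

lemma mySignSum (a b : ℕ) (h : Odd (a + b)) : (-1:ℝ)^a + (-1:ℝ)^b = 0 := by
  rcases Nat.even_or_odd a with ha | ha
  · have hb : Odd b := by
      rcases ha with ⟨k, hk⟩; rcases h with ⟨m, hm⟩; exact ⟨m - k, by omega⟩
    simp [ha.neg_one_pow, hb.neg_one_pow]
  · have hb : Even b := by
      rcases ha with ⟨k, hk⟩; rcases h with ⟨m, hm⟩; exact ⟨m - k, by omega⟩
    simp [ha.neg_one_pow, hb.neg_one_pow]

/-- for even `d ≥ 2` and `1 ≤ i < j ≤ d` with `i+j` odd (1-indexed;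
parity is unchanged by the 0-indexing), the inequality `x_i + x_j ≥ 0` is valid on
`conv(b^{(1)},…,b^{(d+2)})`, with equality exactly for the points `b^{(ℓ)}` with
`ℓ ∈ [d+2] \ {i+2, j+2}`. -/
theorem stmt12 (d : ℕ) (hd : 2 ≤ d) (he : Even d) (i j : Fin d) (hij : i < j)
    (hodd : Odd ((i:ℕ) + (j:ℕ))) :
    (∀ x ∈ convexHull ℝ (Set.range (bvec d)), 0 ≤ x i + x j) ∧
    (∀ ℓ : Fin (d+2),
      bvec d ℓ i + bvec d ℓ j = 0 ↔ ((ℓ:ℕ) ≠ (i:ℕ)+2 ∧ (ℓ:ℕ) ≠ (j:ℕ)+2)) := by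
  have hne : (i:ℕ) ≠ (j:ℕ) := Fin.val_ne_of_ne (ne_of_lt hij)
  obtain ⟨m, hm⟩ := hodd
  have key : ∀ ℓ : Fin (d+2), bvec d ℓ i + bvec d ℓ j =
      if (ℓ:ℕ) = (i:ℕ)+2 ∨ (ℓ:ℕ) = (j:ℕ)+2 then (d+2:ℝ) else 0 := by
    intro ℓ
    unfold bvec
    rcases eq_or_ne ((ℓ:ℕ)) ((i:ℕ)+2) with h1 | h1
    · have h2 : ¬ ((j:ℕ)+2 = (ℓ:ℕ)) := by omega
      have hev : Even ((j:ℕ)+(ℓ:ℕ)+1) := ⟨m+2, by omega⟩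
      rw [if_pos h1.symm, if_neg h2, if_pos (Or.inl h1), hev.neg_one_pow]
      ring
    · rcases eq_or_ne ((ℓ:ℕ)) ((j:ℕ)+2) with h2 | h2
      · have h1' : ¬ ((i:ℕ)+2 = (ℓ:ℕ)) := by omega
        have hev : Even ((i:ℕ)+(ℓ:ℕ)+1) := ⟨m+2, by omega⟩
        rw [if_pos h2.symm, if_neg h1', if_pos (Or.inr h2), hev.neg_one_pow]
        ring
      · have h1' : ¬ ((i:ℕ)+2 = (ℓ:ℕ)) := fun h => h1 h.symm
        have h2' : ¬ ((j:ℕ)+2 = (ℓ:ℕ)) := fun h => h2 h.symm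
        rw [if_neg h1', if_neg h2', if_neg (by tauto)]
        exact mySignSum _ _ ⟨m + (ℓ:ℕ) + 1, by omega⟩
  constructor
  · intro x hx
    have hsub : convexHull ℝ (Set.range (bvec d)) ⊆ {x : Fin d → ℝ | 0 ≤ x i + x j} := by
      apply convexHull_min
      · rintro _ ⟨ℓ, rfl⟩
        simp only [Set.mem_setOf_eq]
        rw [key ℓ]
        split
        · positivity
        · exact le_refl 0
      · exact convex_halfSpace_ge ⟨fun a b => by simp; ring, fun c a => by simp; ring⟩ 0
    exact hsub hx
  · intro ℓ
    rw [key ℓ]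
    split
    · rename_i h
      constructor
      · intro h'
        exfalso
        have : (0:ℝ) < d + 2 := by positivity
        linarith
      · rintro ⟨ha, hb⟩
        exfalso; rcases h with h | h <;> [exact ha h; exact hb h]
    · rename_i h
      push_neg at h
      simp [h]
end

section
/- Let d ≥ 2 be even. The polytope conv(b^{(1)},...,b^{(d+2)}) ⊂ ℝ^d, with b^{(ℓ)}_k = d+1 if k = ℓ−2 and b^{(ℓ)}_k = (-1)^{k+ℓ-1} otherwise, is simplicial: every facet is a (d−1)-simplex, i.e., has exactly d vertices. -/
open Matrix

lemma pow_neg_one_add_two (m : ℕ) : (-1:ℝ)^(m+2) = (-1:ℝ)^m := by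
  rw [pow_add]; norm_num

lemma neg_one_sq_pow (m : ℕ) : (-1:ℝ)^m * (-1:ℝ)^m = 1 := by
  rw [← pow_add]; exact Even.neg_one_pow ⟨m, rfl⟩

lemma bvec_dep (d : ℕ) (k : Fin d) :
    ∑ ℓ : Fin (d+2), (-1:ℝ)^(ℓ:ℕ) * bvec d ℓ k = 0 := by
  set L : Fin (d+2) := ⟨(k:ℕ)+2, by omega⟩ with hL
  rw [← Finset.add_sum_erase _ _ (Finset.mem_univ L)]
  have h1 : (-1:ℝ)^(L:ℕ) * bvec d L k = (-1:ℝ)^(k:ℕ) * (d+1) := by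
    simp [bvec, hL, pow_neg_one_add_two]
  have h2 : ∀ ℓ ∈ Finset.univ.erase L,
      (-1:ℝ)^(ℓ:ℕ) * bvec d ℓ k = -(-1:ℝ)^(k:ℕ) := by
    intro ℓ hℓ
    have hne : (k:ℕ) + 2 ≠ (ℓ:ℕ) := fun h =>
      (Finset.ne_of_mem_erase hℓ) (Fin.ext h.symm)
    rw [bvec, if_neg hne,
      show (k:ℕ)+(ℓ:ℕ)+1 = ((k:ℕ)+1)+(ℓ:ℕ) by omega, pow_add, pow_add, pow_one]
    have := neg_one_sq_pow (ℓ:ℕ)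
    linear_combination (-(-1:ℝ)^(k:ℕ)) * this
  rw [Finset.sum_congr rfl h2, Finset.sum_const, h1]
  have hcard : (Finset.univ.erase L).card = d + 1 := by
    rw [Finset.card_erase_of_mem (Finset.mem_univ L)]; simp
  rw [hcard]
  ring

lemma signSummy (d : ℕ) (he : Even d) : ∑ ℓ : Fin (d+2), (-1:ℝ)^(ℓ:ℕ) = 0 := by
  rw [Fin.sum_univ_eq_sum_range (fun i => (-1:ℝ)^i), neg_one_geom_sum,
    if_pos (by simpa [Nat.even_add] using he)]

lemma bvec_eval_zero (d : ℕ) (a : Fin d → ℝ) :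
    ∑ k, a k * bvec d 0 k = -∑ k, (-1:ℝ)^(k.val) * a k := by
  rw [← Finset.sum_neg_distrib]
  refine Finset.sum_congr rfl fun k _ => ?_
  have h : ((0 : Fin (d+2)) : ℕ) = 0 := rfl
  rw [bvec, h, if_neg (by omega), pow_add, pow_one]
  ring

lemma bvec_eval_one (d : ℕ) (a : Fin d → ℝ) :
    ∑ k, a k * bvec d 1 k = ∑ k, (-1:ℝ)^(k.val) * a k := by
  refine Finset.sum_congr rfl fun k _ => ?_
  have h : ((1 : Fin (d+2)) : ℕ) = 1 := rfl
  rw [bvec, h, if_neg (by omega), pow_neg_one_add_two]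
  ring

lemma bvec_eval_succ (d : ℕ) (a : Fin d → ℝ) (m : Fin d) :
    ∑ k, a k * bvec d ⟨(m:ℕ)+2, by omega⟩ k
      = (d+2) * a m + (-1:ℝ)^((m:ℕ)+1) * ∑ k, (-1:ℝ)^(k.val) * a k := by
  rw [← Finset.add_sum_erase _ _ (Finset.mem_univ m)]
  have h1 : a m * bvec d ⟨(m:ℕ)+2, by omega⟩ m = a m * (d+1) := by
    simp [bvec]
  have h2 : ∀ k ∈ Finset.univ.erase m,
      a k * bvec d ⟨(m:ℕ)+2, by omega⟩ k
        = (-1:ℝ)^((m:ℕ)+1) * ((-1:ℝ)^(k.val) * a k) := by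
    intro k hk
    have hne : (k:ℕ) + 2 ≠ (m:ℕ) + 2 := fun h =>
      (Finset.ne_of_mem_erase hk) (Fin.ext (by omega))
    rw [bvec]
    simp only []
    rw [if_neg hne,
      show (k:ℕ)+((m:ℕ)+2)+1 = ((m:ℕ)+1)+(k:ℕ)+2 by omega, pow_neg_one_add_two, pow_add]
    ring
  rw [Finset.sum_congr rfl h2, ← Finset.mul_sum, h1,
    Finset.sum_erase_eq_sub (Finset.mem_univ m)]
  have := neg_one_sq_pow (m:ℕ)
  linear_combination (a m) * this

/-- for even `d ≥ 2`, the polytope `P = conv(b^{(1)},…,b^{(d+2)})` is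
simplicial: every facet of `P` — a face cut out by a valid inequality
`Σ_k a_k x_k ≤ c` whose affine hull has dimension `d-1` — contains exactly `d` of
the vertices `b^{(ℓ)}`, i.e. is a `(d-1)`-simplex. -/
theorem stmt13 (d : ℕ) (hd : 2 ≤ d) (he : Even d) (a : Fin d → ℝ) (c : ℝ)
    (ha : a ≠ 0)
    (hvalid : ∀ x ∈ convexHull ℝ (Set.range (bvec d)), ∑ k, a k * x k ≤ c)
    (hdim : Module.finrank ℝ (affineSpan ℝ
        {x ∈ convexHull ℝ (Set.range (bvec d)) | ∑ k, a k * x k = c}).direction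
      = d - 1) :
    {ℓ : Fin (d+2) | ∑ k, a k * bvec d ℓ k = c}.ncard = d := by
  classical
  set T : Set (Fin (d+2)) := {ℓ : Fin (d+2) | ∑ k, a k * bvec d ℓ k = c} with hT
  have hmemT : ∀ ℓ : Fin (d+2), ℓ ∈ T ↔ ∑ k, a k * bvec d ℓ k = c := fun ℓ => Iff.rfl
  clear_value T
  have hTfin : T.Finite := Set.toFinite T
  have hle : ∀ ℓ, ∑ k, a k * bvec d ℓ k ≤ c := fun ℓ =>
    hvalid _ (subset_convexHull ℝ _ ⟨ℓ, rfl⟩)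
  -- Lower bound: d ≤ T.ncard
  have hlow : d ≤ T.ncard := by
    have hFsub : {x ∈ convexHull ℝ (Set.range (bvec d)) | ∑ k, a k * x k = c}
        ⊆ convexHull ℝ (bvec d '' T) := by
      rintro x ⟨hxP, hxc⟩
      rw [convexHull_range_eq_exists_affineCombination] at hxP
      obtain ⟨s, w, hw0, hw1, hxeq⟩ := hxP
      rw [Finset.affineCombination_eq_linear_combination s _ w hw1] at hxeq
      have hfx : ∑ i ∈ s, w i * (∑ k, a k * bvec d i k) = c := by
        rw [← hxc, ← hxeq]
        simp only [Finset.mul_sum, Finset.sum_apply, Pi.smul_apply, smul_eq_mul]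
        rw [Finset.sum_comm]
        exact Finset.sum_congr rfl fun k _ => Finset.sum_congr rfl fun i _ => by ring
      have hterm : ∀ i ∈ s, w i * (c - ∑ k, a k * bvec d i k) = 0 := by
        have hsum0 : ∑ i ∈ s, w i * (c - ∑ k, a k * bvec d i k) = 0 := by
          simp only [mul_sub]
          rw [Finset.sum_sub_distrib, hfx, ← Finset.sum_mul, hw1, one_mul, sub_self]
        exact fun i hi => (Finset.sum_eq_zero_iff_of_nonneg
          (fun j hj => mul_nonneg (hw0 j hj) (sub_nonneg.2 (hle j)))).1 hsum0 i hi
      have hsum1 : ∑ i ∈ s.filter (fun i => w i ≠ 0), w i = 1 := by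
        rw [Finset.sum_filter_ne_zero]; exact hw1
      have hxcm : x = (s.filter (fun i => w i ≠ 0)).centerMass w (bvec d) := by
        rw [Finset.centerMass_eq_of_sum_1 _ _ hsum1,
          Finset.sum_filter_of_ne (p := fun i => w i ≠ 0)
            (fun i _ hf hwi => hf (by rw [hwi, zero_smul])), hxeq]
      rw [hxcm]
      refine Finset.centerMass_mem_convexHull _
        (fun i hi => hw0 i (Finset.mem_filter.1 hi).1) (by rw [hsum1]; norm_num) ?_
      intro i hi
      obtain ⟨his, hwi⟩ := Finset.mem_filter.1 hi
      refine ⟨i, ?_, rfl⟩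
      have hci := hterm i his
      rcases mul_eq_zero.1 hci with h | h
      · exact absurd h hwi
      · exact (hmemT i).2 (by linarith)
    have hspan : (affineSpan ℝ
        {x ∈ convexHull ℝ (Set.range (bvec d)) | ∑ k, a k * x k = c})
        ≤ affineSpan ℝ (bvec d '' T) := by
      refine le_trans (affineSpan_mono ℝ hFsub) ?_
      rw [affineSpan_convexHull]
    have hd1 : (d - 1 : ℕ) ≤ Module.finrank ℝ (vectorSpan ℝ (bvec d '' T)) := by
      rw [← hdim, ← direction_affineSpan]
      exact Submodule.finrank_mono (AffineSubspace.direction_le hspan)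
    have hTne : T.Nonempty := by
      by_contra h
      rw [Set.not_nonempty_iff_eq_empty] at h
      rw [h] at hd1
      rw [Set.image_empty, vectorSpan_empty, finrank_bot] at hd1
      clear hdim; omega
    have hcard1 : 1 ≤ hTfin.toFinset.card := by
      rw [Finset.one_le_card]
      exact (Set.Finite.toFinset_nonempty hTfin).2 hTne
    have hup : Module.finrank ℝ (vectorSpan ℝ (bvec d '' T)) ≤ hTfin.toFinset.card - 1 := by
      have himg : bvec d '' T = ↑(hTfin.toFinset.image (bvec d)) := by
        rw [Finset.coe_image, Set.Finite.coe_toFinset]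
      rw [himg]
      exact finrank_vectorSpan_image_finset_le ℝ (bvec d) _ (Nat.succ_pred_eq_of_pos hcard1).symm
    have hnc : T.ncard = hTfin.toFinset.card := Set.ncard_eq_toFinset_card _ hTfin
    clear hdim; omega
  -- Upper bound
  have hub : ¬ d < T.ncard := by
    intro hgt
    have hAll : ∃ ℓ₀ : Fin (d+2), ∀ ℓ, ℓ ≠ ℓ₀ → ℓ ∈ T := by
      by_cases hU : ∀ ℓ, ℓ ∈ T
      · exact ⟨0, fun ℓ _ => hU ℓ⟩
      · push_neg at hU
        obtain ⟨ℓ₀, hℓ₀⟩ := hU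
        refine ⟨ℓ₀, fun ℓ hne => ?_⟩
        by_contra hℓ
        have hsubT : T ⊆ (↑((Finset.univ.erase ℓ₀).erase ℓ) : Set (Fin (d+2))) := by
          intro j hj
          simp only [Finset.coe_erase, Set.mem_diff, Finset.coe_univ, Set.mem_univ,
            Set.mem_singleton_iff]
          refine ⟨⟨trivial, ?_⟩, ?_⟩ <;> rintro rfl <;> [exact hℓ₀ hj; exact hℓ hj]
        have hcle := Set.ncard_le_ncard hsubT (Set.toFinite _)
        have hcc : (↑((Finset.univ.erase ℓ₀).erase ℓ) : Set (Fin (d+2))).ncard = d := by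
          rw [Set.ncard_coe_finset,
            Finset.card_erase_of_mem (Finset.mem_erase.2 ⟨hne, Finset.mem_univ _⟩),
            Finset.card_erase_of_mem (Finset.mem_univ _)]
          simp
        clear hdim; omega
    obtain ⟨ℓ₀, hAllT⟩ := hAll
    have hCl : ∀ ℓ, ∑ k, a k * bvec d ℓ k = c := by
      have hkey : ∑ ℓ : Fin (d+2), (-1:ℝ)^(ℓ:ℕ) * ((∑ k, a k * bvec d ℓ k) - c) = 0 := by
        simp only [mul_sub]
        rw [Finset.sum_sub_distrib]
        have h1 : ∑ ℓ : Fin (d+2), (-1:ℝ)^(ℓ:ℕ) * ∑ k, a k * bvec d ℓ k = 0 := by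
          simp only [Finset.mul_sum]
          rw [Finset.sum_comm]
          refine Finset.sum_eq_zero fun k _ => ?_
          have : ∀ ℓ : Fin (d+2), (-1:ℝ)^(ℓ:ℕ) * (a k * bvec d ℓ k)
              = a k * ((-1:ℝ)^(ℓ:ℕ) * bvec d ℓ k) := fun ℓ => by ring
          rw [Finset.sum_congr rfl fun ℓ _ => this ℓ, ← Finset.mul_sum, bvec_dep, mul_zero]
        have h2 : ∑ ℓ : Fin (d+2), (-1:ℝ)^(ℓ:ℕ) * c = 0 := by
          rw [← Finset.sum_mul, signSummy d he, zero_mul]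
        rw [h1, h2, sub_self]
      intro ℓ
      by_cases hℓ : ℓ = ℓ₀
      · subst hℓ
        have hsingle : ∑ ℓ' : Fin (d+2), (-1:ℝ)^(ℓ':ℕ) * ((∑ k, a k * bvec d ℓ' k) - c)
            = (-1:ℝ)^(ℓ:ℕ) * ((∑ k, a k * bvec d ℓ k) - c) :=
          Finset.sum_eq_single_of_mem ℓ (Finset.mem_univ ℓ) fun b _ hb => by
            rw [(hmemT b).1 (hAllT b hb), sub_self, mul_zero]
        rw [hsingle] at hkey
        rcases mul_eq_zero.1 hkey with h | h
        · exact absurd h (pow_ne_zero _ (by norm_num))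
        · linarith
      · exact (hmemT ℓ).1 (hAllT ℓ hℓ)
    have h0 := hCl 0
    rw [bvec_eval_zero] at h0
    have h1 := hCl 1
    rw [bvec_eval_one] at h1
    have hA : ∑ k, (-1:ℝ)^(k.val) * a k = 0 := by linarith
    have hc0 : c = 0 := by linarith
    refine ha (funext fun m => ?_)
    have hm := hCl ⟨(m:ℕ)+2, Nat.add_lt_add_right m.isLt 2⟩
    rw [bvec_eval_succ, hA, mul_zero, add_zero, hc0] at hm
    have hd2 : (d:ℝ)+2 ≠ 0 := by positivity
    have := mul_eq_zero.1 hm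
    simpa [hd2] using this
  clear hdim; omega
end

section
/- Let d ≥ 2 be even. The d-th Laplacian polytope of the boundary of the (d+1)-simplex has exactly (d+2)²/4 facets. -/
open Matrix

/-- The `d`-th Laplacian polytope of `∂σ_{d+1}`, realized full-dimensionally. -/
def LapPolytope (d : ℕ) : Set (Fin d → ℝ) := convexHull ℝ (Set.range (bvec d))

/-- `F` is a facet of the Laplacian polytope: a nonempty face cut out by a valid
inequality, whose affine hull has dimension `d-1`. -/
def IsFacetOf (d : ℕ) (F : Set (Fin d → ℝ)) : Prop :=
  F.Nonempty ∧ ∃ (a : Fin d → ℝ) (c : ℝ),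
    (∀ x ∈ LapPolytope d, ∑ k, a k * x k ≤ c) ∧
    F = {x ∈ LapPolytope d | ∑ k, a k * x k = c} ∧
    Module.finrank ℝ (affineSpan ℝ F).direction = d - 1

/-
The `d + 2` vertices `b⁽ℓ⁾` satisfy the affine dependence `∑ (-1)^ℓ b⁽ℓ⁾ = 0`, whose weights sum
to `0` because `d` is even; since the vertices affinely span `ℝ^d`, any `d + 1` of them form an
affine basis. If `∑ a_k x_k ≤ c` is valid, the slacks `t_j = c - a · b⁽ʲ⁾ ≥ 0` therefore satisfy
`∑ (-1)^j t_j = 0`, so a proper face misses vertices of both parities; a facet has at least `d`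
vertices, so it misses exactly one even `ℓ` and one odd `m`. Conversely, the barycentric
coordinate of `b⁽ℓ⁾` with respect to all vertices but `b⁽m⁾` is `1` at `b⁽ℓ⁾` and `b⁽m⁾` and `0`
at the other vertices, and cuts out the facet `conv {b⁽ʲ⁾ | j ≠ ℓ, m}`. Facets thus correspond to
the `((d + 2) / 2)²` pairs `(ℓ, m)`.
-/

theorem Fin.ne_of_even_of_odd {n : ℕ} {i j : Fin n} (hi : Even (i : ℕ)) (hj : Odd (j : ℕ)) :
    i ≠ j := fun h => Nat.not_even_iff_odd.2 hj (h ▸ hi)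

theorem neg_one_pow_add_add_one_self (m : ℕ) : (-1 : ℝ) ^ (m + m + 1) = -1 := by
  rw [← two_mul, pow_succ, pow_mul, neg_one_sq, one_pow, one_mul]

theorem sum_neg_one_pow_fin {n : ℕ} (hn : Even n) : ∑ i : Fin n, (-1 : ℝ) ^ (i : ℕ) = 0 := by
  rw [Fin.sum_univ_eq_sum_range, neg_one_geom_sum, if_pos hn]

open Finset in
theorem card_filter_even_fin {k : ℕ} (hk : Even k) : #{i : Fin k | Even (i : ℕ)} = k / 2 := by
  obtain ⟨n, rfl⟩ := hk.exists_two_nsmul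
  rw [smul_eq_mul, Nat.mul_div_cancel_left _ two_pos]
  induction n with
  | zero => simp
  | succ n ih =>
    rw [Nat.mul_succ, Fin.card_filter_univ_succ', Fin.card_filter_univ_succ']
    simp [Nat.one_mod_eq_one.2 (by omega : 2 + 2 * n ≠ 1), parity_simps, ih, add_comm]

open Finset in
theorem card_filter_odd_fin {k : ℕ} (hk : Even k) : #{i : Fin k | Odd (i : ℕ)} = k / 2 := by
  have h := card_filter_add_card_filter_not (s := univ) (p := fun i : Fin k => Even (i : ℕ))
  simp only [Nat.not_even_iff_odd, card_univ, Fintype.card_fin, card_filter_even_fin hk] at h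
  have := Nat.even_iff.1 hk
  omega

theorem exists_even_pos_and_exists_odd_pos {n : ℕ} {t : Fin n → ℝ} (ht : ∀ j, 0 ≤ t j)
    (hsum : ∑ j : Fin n, (-1 : ℝ) ^ (j : ℕ) * t j = 0) (hpos : ∃ j, 0 < t j) :
    (∃ ℓ : Fin n, Even (ℓ : ℕ) ∧ 0 < t ℓ) ∧ ∃ m : Fin n, Odd (m : ℕ) ∧ 0 < t m := by
  obtain ⟨j, hj⟩ := hpos
  have hne : ∃ i ∈ (Finset.univ : Finset (Fin n)), (-1 : ℝ) ^ (i : ℕ) * t i ≠ 0 :=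
    ⟨j, Finset.mem_univ _, mul_ne_zero (pow_ne_zero _ (by norm_num)) hj.ne'⟩
  obtain ⟨ℓ, -, hℓ⟩ := Finset.exists_pos_of_sum_zero_of_exists_nonzero _ hsum hne
  obtain ⟨m, -, hm⟩ := Finset.exists_pos_of_sum_zero_of_exists_nonzero
    (fun i : Fin n => -((-1 : ℝ) ^ (i : ℕ) * t i)) (by rw [Finset.sum_neg_distrib, hsum, neg_zero])
    (by simpa using hne)
  constructor
  · refine ⟨ℓ, ?_⟩
    rcases Nat.even_or_odd (ℓ : ℕ) with h | h
    · rw [h.neg_one_pow, one_mul] at hℓ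
      exact ⟨h, hℓ⟩
    · rw [h.neg_one_pow] at hℓ
      linarith [ht ℓ]
  · refine ⟨m, ?_⟩
    rcases Nat.even_or_odd (m : ℕ) with h | h
    · rw [h.neg_one_pow] at hm
      linarith [ht m]
    · rw [h.neg_one_pow] at hm
      exact ⟨h, by linarith⟩

theorem AffineMap.exists_eq_sum_mul_add {ι : Type*} [Fintype ι] (g : (ι → ℝ) →ᵃ[ℝ] ℝ) :
    ∃ (a : ι → ℝ) (c : ℝ), ∀ x, g x = ∑ k, a k * x k + c := by
  classical
  refine ⟨fun k => g.linear fun j => if k = j then 1 else 0, g 0, fun x => ?_⟩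
  rw [g.decomp, Pi.add_apply, LinearMap.pi_apply_eq_sum_univ]
  simp [mul_comm]

open Finset in
theorem setOf_mem_convexHull_range_and_eq {ι E : Type*} [AddCommGroup E] [Module ℝ E]
    {p : ι → E} {f : E →ₗ[ℝ] ℝ} {c : ℝ} (hf : ∀ i, f (p i) ≤ c) :
    {x ∈ convexHull ℝ (Set.range p) | f x = c} = convexHull ℝ (p '' {i | f (p i) = c}) := by
  classical
  refine Set.Subset.antisymm ?_ (convexHull_min ?_ ((convex_convexHull ℝ _).inter
    (convex_hyperplane f.isLinear c)))
  · rintro x ⟨hx, hfx⟩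
    rw [convexHull_range_eq_exists_affineCombination] at hx
    obtain ⟨s, w, hw0, hw1, rfl⟩ := hx
    rw [affineCombination_eq_linear_combination _ _ _ hw1] at hfx ⊢
    have hslack : ∑ i ∈ s, w i * (c - f (p i)) = 0 := by
      simp only [mul_sub, sum_sub_distrib, ← sum_mul, hw1, map_sum, map_smul, smul_eq_mul] at hfx ⊢
      linarith
    have hw : ∀ i ∈ s, w i ≠ 0 → f (p i) = c := fun i hi hwi => by
      have := (sum_eq_zero_iff_of_nonneg fun j hj => mul_nonneg (hw0 j hj)
        (sub_nonneg.2 (hf j))).1 hslack i hi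
      linarith [(mul_eq_zero.1 this).resolve_left hwi]
    rw [← sum_filter_of_ne fun i hi h => hw i hi (left_ne_zero_of_smul h)]
    rw [← sum_filter_of_ne hw] at hw1
    exact (convex_convexHull ℝ _).sum_mem (fun i hi => hw0 i (mem_filter.1 hi).1) hw1
      fun i hi => subset_convexHull ℝ _ ⟨i, (mem_filter.1 hi).2, rfl⟩
  · rintro _ ⟨i, hi, rfl⟩
    exact ⟨subset_convexHull ℝ _ ⟨i, rfl⟩, hi⟩

namespace LapPolytope

open Finset

variable {d : ℕ}

theorem bvec_one : bvec d 1 = -bvec d 0 := by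
  ext k
  simp [bvec, pow_succ]

theorem bvec_succ_succ (k : Fin d) :
    bvec d k.succ.succ = (-1 : ℝ) ^ (k : ℕ) • bvec d 0 + ((d : ℝ) + 2) • Pi.single k 1 := by
  ext j
  by_cases h : j = k
  · subst h
    simp [bvec, ← pow_add, pow_succ, ← two_mul, pow_mul]
    ring
  · have h' : (j : ℕ) ≠ k := Fin.val_ne_of_ne h
    simp [bvec, h, h', ← pow_add]
    ring_nf

theorem sum_neg_one_pow_smul_bvec : ∑ ℓ : Fin (d + 2), (-1 : ℝ) ^ (ℓ : ℕ) • bvec d ℓ = 0 := by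
  rw [Fin.sum_univ_succ, Fin.sum_univ_succ]
  simp only [Fin.succ_zero_eq_one, bvec_one, bvec_succ_succ, Fin.val_succ, smul_add, smul_smul,
    ← pow_add, sum_add_distrib, ← sum_smul]
  ext j
  have hsq : ∀ i : ℕ, (-1 : ℝ) ^ (i + 1 + 1 + i) = 1 := fun i => by
    rw [show i + 1 + 1 + i = 2 * (i + 1) by ring, pow_mul, neg_one_sq, one_pow]
  simp [Finset.sum_apply, Pi.single_apply, hsq, bvec, pow_succ]
  ring

theorem vectorSpan_range_bvec : vectorSpan ℝ (Set.range (bvec d)) = ⊤ := by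
  set V := vectorSpan ℝ (Set.range (bvec d))
  have hsub : ∀ i j, bvec d i - bvec d j ∈ V := fun i j =>
    vsub_mem_vectorSpan ℝ ⟨i, rfl⟩ ⟨j, rfl⟩
  have h0 : bvec d 0 ∈ V := by
    have := V.smul_mem (1 / 2 : ℝ) (hsub 0 1)
    rwa [bvec_one, sub_neg_eq_add, ← two_smul ℝ, smul_smul, one_div_mul_cancel two_ne_zero,
      one_smul] at this
  have hsingle : ∀ k, Pi.single k 1 ∈ V := fun k => by
    have hd : ((d : ℝ) + 2) ≠ 0 := by positivity
    have key : ((d : ℝ) + 2) • Pi.single k (1 : ℝ)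
        = bvec d k.succ.succ - bvec d 0 + (1 - (-1 : ℝ) ^ (k : ℕ)) • bvec d 0 := by
      rw [bvec_succ_succ, sub_smul, one_smul]
      abel
    convert V.smul_mem ((d : ℝ) + 2)⁻¹
      (V.add_mem (hsub k.succ.succ 0) (V.smul_mem (1 - (-1 : ℝ) ^ (k : ℕ)) h0)) using 1
    rw [← key, inv_smul_smul₀ hd]
  rw [eq_top_iff, ← (Pi.basisFun ℝ (Fin d)).span_eq, Submodule.span_le]
  rintro _ ⟨k, rfl⟩
  simpa using hsingle k

theorem sum_neg_one_pow_mul_sub_sum_mul_bvec (he : Even d) (a : Fin d → ℝ) (c : ℝ) :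
    ∑ j : Fin (d + 2), (-1 : ℝ) ^ (j : ℕ) * (c - ∑ k, a k * bvec d j k) = 0 := by
  have h := congrArg (dotProductBilin ℝ ℝ a) sum_neg_one_pow_smul_bvec
  simp only [map_sum, map_smul, map_zero, smul_eq_mul] at h
  simp only [mul_sub, sum_sub_distrib, ← sum_mul,
    sum_neg_one_pow_fin (he.add even_two), zero_mul, zero_sub, neg_eq_zero]
  exact h

theorem sum_ne_neg_one_pow (he : Even d) (m : Fin (d + 2)) :
    ∑ j : {j // j ≠ m}, (-1 : ℝ) ^ ((j : ℕ) + m + 1) = 1 := by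
  have h := Fintype.sum_eq_add_sum_subtype_ne
    (fun j : Fin (d + 2) => (-1 : ℝ) ^ ((j : ℕ) + m + 1)) m
  have hsum : ∑ j : Fin (d + 2), (-1 : ℝ) ^ ((j : ℕ) + m + 1) = 0 := by
    simp only [pow_add, ← sum_mul, sum_neg_one_pow_fin (he.add even_two), zero_mul]
  rw [hsum, neg_one_pow_add_add_one_self] at h
  linarith

theorem sum_ne_neg_one_pow_smul_bvec (m : Fin (d + 2)) :
    ∑ j : {j // j ≠ m}, (-1 : ℝ) ^ ((j : ℕ) + m + 1) • bvec d j = bvec d m := by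
  have h := Fintype.sum_eq_add_sum_subtype_ne
    (fun j : Fin (d + 2) => (-1 : ℝ) ^ ((j : ℕ) + m + 1) • bvec d j) m
  have hsum : ∑ j : Fin (d + 2), (-1 : ℝ) ^ ((j : ℕ) + m + 1) • bvec d j = 0 := by
    have hfactor : ∀ j : Fin (d + 2), (-1 : ℝ) ^ ((j : ℕ) + m + 1) • bvec d j
        = (-1 : ℝ) ^ ((m : ℕ) + 1) • ((-1 : ℝ) ^ (j : ℕ) • bvec d j) := fun j => by
      rw [smul_smul, ← pow_add]
      congr 2
      ring
    rw [sum_congr rfl fun j _ => hfactor j, ← smul_sum, sum_neg_one_pow_smul_bvec,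
      smul_zero]
  rw [hsum, neg_one_pow_add_add_one_self, neg_one_smul, eq_comm, neg_add_eq_zero] at h
  exact h.symm

theorem affineCombination_ne_bvec (he : Even d) (m : Fin (d + 2)) :
    univ.affineCombination ℝ (fun j : {j // j ≠ m} => bvec d j)
      (fun j => (-1 : ℝ) ^ ((j : ℕ) + m + 1)) = bvec d m := by
  rw [affineCombination_eq_linear_combination _ _ _ (sum_ne_neg_one_pow he m)]
  exact sum_ne_neg_one_pow_smul_bvec m

theorem affineSpan_range_bvec_ne (he : Even d) (m : Fin (d + 2)) :
    affineSpan ℝ (Set.range fun j : {j // j ≠ m} => bvec d j) = ⊤ := by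
  have hall : affineSpan ℝ (Set.range (bvec d)) = ⊤ :=
    (AffineSubspace.affineSpan_eq_top_iff_vectorSpan_eq_top_of_nonempty ℝ _ _
      (Set.range_nonempty _)).2 vectorSpan_range_bvec
  refine eq_top_iff.2 (hall ▸ affineSpan_le.2 ?_)
  rintro _ ⟨j, rfl⟩
  by_cases hj : j = m
  · subst hj
    rw [← affineCombination_ne_bvec he j]
    exact affineCombination_mem_affineSpan (sum_ne_neg_one_pow he j) _
  · exact subset_affineSpan ℝ _ ⟨⟨j, hj⟩, rfl⟩

theorem affineIndependent_bvec_ne (he : Even d) (m : Fin (d + 2)) :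
    AffineIndependent ℝ (fun j : {j // j ≠ m} => bvec d j) := by
  rw [affineIndependent_iff_le_finrank_vectorSpan ℝ _
      (by simp : Fintype.card {j // j ≠ m} = d + 1),
    ← direction_affineSpan, affineSpan_range_bvec_ne he m, AffineSubspace.direction_top,
    finrank_top, Module.finrank_fin_fun]

noncomputable def basisNe (he : Even d) (m : Fin (d + 2)) :
    AffineBasis {j // j ≠ m} ℝ (Fin d → ℝ) :=
  ⟨fun j => bvec d j, affineIndependent_bvec_ne he m, affineSpan_range_bvec_ne he m⟩

theorem affineIndependent_bvec_of_notMem (he : Even d) {s : Set (Fin (d + 2))} {m : Fin (d + 2)}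
    (hm : m ∉ s) : AffineIndependent ℝ (fun j : s => bvec d j) := by
  have h := (affineIndependent_bvec_ne he m).comp_embedding
    ⟨fun j : s => ⟨j, ne_of_mem_of_not_mem j.2 hm⟩, fun _ _ h => Subtype.ext (by simpa using h)⟩
  exact h

theorem exists_sub_sum_mul_bvec_eq (he : Even d) {ℓ m : Fin (d + 2)} (hℓ : Even (ℓ : ℕ))
    (hm : Odd (m : ℕ)) : ∃ (a : Fin d → ℝ) (c : ℝ),
      ∀ j, c - ∑ k, a k * bvec d j k = if j = ℓ ∨ j = m then 1 else 0 := by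
  have hℓm : ℓ ≠ m := Fin.ne_of_even_of_odd hℓ hm
  set g := (basisNe he m).coord ⟨ℓ, hℓm⟩
  obtain ⟨a, c, hg⟩ := g.exists_eq_sum_mul_add
  refine ⟨-a, c, fun j => ?_⟩
  have hgj : c - ∑ k, (-a) k * bvec d j k = g (bvec d j) := by
    simp [hg, add_comm]
  rw [hgj]
  by_cases hj : j = m
  · -- the coordinate of `b⁽ᵐ⁾` is the weight `(-1)^(ℓ+m+1) = 1` of `b⁽ℓ⁾` in the affine dependence
    subst hj
    rw [← affineCombination_ne_bvec he j, if_pos (Or.inr rfl)]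
    refine ((basisNe he j).coord_apply_combination_of_mem (mem_univ _)
      (sum_ne_neg_one_pow he j)).trans ?_
    rw [add_assoc]
    exact (hℓ.add hm.add_one).neg_one_pow
  · rw [show bvec d j = basisNe he m ⟨j, hj⟩ from rfl, AffineBasis.coord_apply]
    simp [Subtype.ext_iff, hj, eq_comm]

theorem bvec_mem_lapPolytope (j : Fin (d + 2)) : bvec d j ∈ LapPolytope d :=
  subset_convexHull ℝ _ ⟨j, rfl⟩

theorem sum_mul_le_of_forall_bvec {a : Fin d → ℝ} {c : ℝ} (h : ∀ j, ∑ k, a k * bvec d j k ≤ c) :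
    ∀ x ∈ LapPolytope d, ∑ k, a k * x k ≤ c := fun _ hx =>
  convexHull_min (Set.range_subset_iff.2 h)
    (convex_halfSpace_le (dotProductBilin ℝ ℝ a).isLinear c) hx

theorem setOf_mem_and_sum_mul_eq {a : Fin d → ℝ} {c : ℝ} (h : ∀ j, ∑ k, a k * bvec d j k ≤ c) :
    {x ∈ LapPolytope d | ∑ k, a k * x k = c}
      = convexHull ℝ (bvec d '' {j | ∑ k, a k * bvec d j k = c}) :=
  setOf_mem_convexHull_range_and_eq (f := dotProductBilin ℝ ℝ a) h

def facet (d : ℕ) (ℓ m : Fin (d + 2)) : Set (Fin d → ℝ) :=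
  convexHull ℝ (bvec d '' ↑({ℓ, m}ᶜ : Finset (Fin (d + 2))))

theorem facet_eq_setOf {ℓ m : Fin (d + 2)} {a : Fin d → ℝ} {c : ℝ}
    (h : ∀ j, c - ∑ k, a k * bvec d j k = if j = ℓ ∨ j = m then 1 else 0) :
    facet d ℓ m = {x ∈ LapPolytope d | ∑ k, a k * x k = c} := by
  have hle : ∀ j, ∑ k, a k * bvec d j k ≤ c := fun j => by
    have := h j
    split_ifs at this <;> linarith
  rw [setOf_mem_and_sum_mul_eq hle, facet]
  congr 2
  ext j
  have := h j
  simp only [coe_compl, coe_insert, coe_singleton, Set.mem_compl_iff,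
    Set.mem_insert_iff, Set.mem_singleton_iff, Set.mem_ofPred_eq]
  split_ifs at this with hj <;> constructor <;> intro <;> first | tauto | linarith

theorem bvec_mem_facet_iff (he : Even d) {ℓ m : Fin (d + 2)} (hℓ : Even (ℓ : ℕ))
    (hm : Odd (m : ℕ)) {j : Fin (d + 2)} : bvec d j ∈ facet d ℓ m ↔ j ≠ ℓ ∧ j ≠ m := by
  obtain ⟨a, c, h⟩ := exists_sub_sum_mul_bvec_eq he hℓ hm
  have hj := h j
  rw [facet_eq_setOf h, Set.mem_sep_iff, and_iff_right (bvec_mem_lapPolytope j)]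
  split_ifs at hj with hjℓm <;> constructor <;> intro <;> first | tauto | linarith

theorem isFacetOf_facet (hd : 2 ≤ d) (he : Even d) {ℓ m : Fin (d + 2)} (hℓ : Even (ℓ : ℕ))
    (hm : Odd (m : ℕ)) : IsFacetOf d (facet d ℓ m) := by
  obtain ⟨a, c, h⟩ := exists_sub_sum_mul_bvec_eq he hℓ hm
  have hℓm : ℓ ≠ m := Fin.ne_of_even_of_odd hℓ hm
  have hcard : ({ℓ, m}ᶜ : Finset (Fin (d + 2))).card = d - 1 + 1 := by
    rw [card_compl, card_pair hℓm, Fintype.card_fin]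
    omega
  refine ⟨?_, a, c, sum_mul_le_of_forall_bvec fun j => ?_, facet_eq_setOf h, ?_⟩
  · obtain ⟨j, hj⟩ := card_pos.1 (by rw [hcard]; omega)
    exact ⟨_, subset_convexHull ℝ _ ⟨j, hj, rfl⟩⟩
  · have := h j
    split_ifs at this <;> linarith
  · rw [facet, affineSpan_convexHull, direction_affineSpan, Set.image_eq_range]
    exact (affineIndependent_bvec_of_notMem he (m := m) (by simp)).finrank_vectorSpan
      ((Fintype.card_coe _).trans hcard)

theorem exists_eq_facet_of_isFacetOf (hd : 2 ≤ d) (he : Even d) {F : Set (Fin d → ℝ)}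
    (hF : IsFacetOf d F) : ∃ ℓ m : Fin (d + 2), Even (ℓ : ℕ) ∧ Odd (m : ℕ) ∧ F = facet d ℓ m := by
  classical
  obtain ⟨hne, a, c, hvalid, rfl, hrank⟩ := hF
  have hle : ∀ j, ∑ k, a k * bvec d j k ≤ c := fun j => hvalid _ (bvec_mem_lapPolytope j)
  set S := univ.filter fun j => ∑ k, a k * bvec d j k = c
  rw [setOf_mem_and_sum_mul_eq hle, show {j | ∑ k, a k * bvec d j k = c} = ↑S by simp [S]]
    at hne hrank ⊢
  rw [affineSpan_convexHull, direction_affineSpan] at hrank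
  have hcard : d ≤ S.card := by
    obtain ⟨n, hn⟩ := Nat.exists_eq_succ_of_ne_zero
      (card_ne_zero.2 (by simpa using hne : S.Nonempty))
    have := finrank_vectorSpan_image_finset_le ℝ (bvec d) S hn
    rw [coe_image, hrank] at this
    omega
  have hproper : ∃ j, j ∉ S := by
    by_contra! h
    rw [eq_univ_of_forall h, coe_univ, Set.image_univ, vectorSpan_range_bvec,
      finrank_top, Module.finrank_fin_fun] at hrank
    omega
  obtain ⟨⟨ℓ, hℓ, hℓpos⟩, m, hm, hmpos⟩ := exists_even_pos_and_exists_odd_pos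
    (t := fun j => c - ∑ k, a k * bvec d j k) (fun j => sub_nonneg.2 (hle j))
    (sum_neg_one_pow_mul_sub_sum_mul_bvec he a c)
    (hproper.imp fun j hj => sub_pos.2 ((hle j).lt_of_ne (by simpa [S] using hj)))
  refine ⟨ℓ, m, hℓ, hm, ?_⟩
  have hsub : {ℓ, m} ⊆ Sᶜ := by
    intro j hj
    simp only [mem_insert, mem_singleton] at hj
    rcases hj with rfl | rfl <;> simp [S] <;> linarith
  have hℓm : ℓ ≠ m := Fin.ne_of_even_of_odd hℓ hm
  have hcompl : Sᶜ = {ℓ, m} := (eq_of_subset_of_card_le hsub (by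
    rw [card_compl, card_pair hℓm, Fintype.card_fin]
    omega)).symm
  rw [facet, ← hcompl, compl_compl]

def evenOddPairs (d : ℕ) : Finset (Fin (d + 2) × Fin (d + 2)) :=
  (univ.filter fun ℓ : Fin (d + 2) => Even (ℓ : ℕ)) ×ˢ
    (univ.filter fun m : Fin (d + 2) => Odd (m : ℕ))

theorem mem_evenOddPairs {p : Fin (d + 2) × Fin (d + 2)} :
    p ∈ evenOddPairs d ↔ Even (p.1 : ℕ) ∧ Odd (p.2 : ℕ) := by
  simp [evenOddPairs]

theorem card_evenOddPairs (he : Even d) : (evenOddPairs d).card = (d + 2) ^ 2 / 4 := by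
  rw [evenOddPairs, card_product, card_filter_even_fin (he.add even_two),
    card_filter_odd_fin (he.add even_two)]
  obtain ⟨n, hn⟩ := (he.add even_two).exists_two_nsmul
  rw [hn, smul_eq_mul, Nat.mul_div_cancel_left _ two_pos, mul_pow, ← sq]
  norm_num

theorem setOf_isFacetOf_eq_image (hd : 2 ≤ d) (he : Even d) :
    {F | IsFacetOf d F}
      = (fun p : Fin (d + 2) × Fin (d + 2) => facet d p.1 p.2) '' ↑(evenOddPairs d) := by
  ext F
  constructor
  · intro hF
    obtain ⟨ℓ, m, hℓ, hm, rfl⟩ := exists_eq_facet_of_isFacetOf hd he hF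
    exact ⟨(ℓ, m), mem_evenOddPairs.2 ⟨hℓ, hm⟩, rfl⟩
  · rintro ⟨p, hp, rfl⟩
    exact isFacetOf_facet hd he (mem_evenOddPairs.1 hp).1 (mem_evenOddPairs.1 hp).2

theorem injOn_facet (he : Even d) :
    Set.InjOn (fun p : Fin (d + 2) × Fin (d + 2) => facet d p.1 p.2) ↑(evenOddPairs d) := by
  rintro ⟨ℓ, m⟩ hp ⟨ℓ', m'⟩ hp' (h : facet d ℓ m = facet d ℓ' m')
  obtain ⟨hℓ, hm⟩ : Even (ℓ : ℕ) ∧ Odd (m : ℕ) := mem_evenOddPairs.1 hp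
  obtain ⟨hℓ', hm'⟩ : Even (ℓ' : ℕ) ∧ Odd (m' : ℕ) := mem_evenOddPairs.1 hp'
  have key : ∀ j, (j ≠ ℓ ∧ j ≠ m) ↔ (j ≠ ℓ' ∧ j ≠ m') := fun j => by
    rw [← bvec_mem_facet_iff he hℓ hm, h, bvec_mem_facet_iff he hℓ' hm']
  have hℓm' : ℓ ≠ m' := Fin.ne_of_even_of_odd hℓ hm'
  have hmℓ' : m ≠ ℓ' := (Fin.ne_of_even_of_odd hℓ' hm).symm
  have hℓℓ' : ℓ = ℓ' := by_contra fun hne => ((key ℓ).2 ⟨hne, hℓm'⟩).1 rfl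
  have hmm' : m = m' := by_contra fun hne => ((key m).2 ⟨hmℓ', hne⟩).2 rfl
  rw [hℓℓ', hmm']

end LapPolytope

/-- for even `d ≥ 2`, the `d`-th Laplacian polytope of the boundary
of the `(d+1)`-simplex has exactly `(d+2)²/4` facets. -/
theorem stmt14 (d : ℕ) (hd : 2 ≤ d) (he : Even d) :
    {F : Set (Fin d → ℝ) | IsFacetOf d F}.ncard = (d+2)^2/4 := by
  rw [LapPolytope.setOf_isFacetOf_eq_image hd he, (LapPolytope.injOn_facet he).ncard_image,
    Set.ncard_coe_finset, LapPolytope.card_evenOddPairs he]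
end

section
/- Let d ≥ 2 be even. The d-th Laplacian polytope of the boundary of the (d+1)-simplex is combinatorially equivalent to a d-dimensional cyclic polytope on d+2 vertices (it is of Grünbaum type T^d_{d/2}). -/
/-!
Each of the two configurations consists of `d + 2` points spanning `ℝ^d`, so its affine
dependences form a line, spanned by `c ℓ = (-1)^ℓ` for the Laplacian polytope and by
`c ℓ = (-1)^ℓ * (d+1).choose ℓ` for the moment curve (the `(d+1)`-st forward difference kills
polynomials of degree `≤ d`). For such a circuit, `conv (v '' S)` is a face exactly when `S` is
everything or the complement of `S` carries both signs of `c`.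

If the complement is one-signed, say negative, the Radon point `∑ c⁺ • v / ∑ c⁺ = ∑ c⁻ • v / ∑ c⁻`
lies in `conv (v '' S)`, so an exposed face containing it also contains every `v j` with
`c j < 0`, in particular one with `j ∉ S`. Writing that `v j` as a convex combination of `v '' S`
gives an affine dependence that cannot be a multiple of `c` once `c` has two negative entries.
Otherwise, values `0` on `S` and negative off `S` can be chosen orthogonal to `c`; they are then
the values of an affine function, whose linear part exposes `conv (v '' S)`.

Both dependences alternate in sign, so the identity bijection matches the faces.
-/

open Matrix

/-- The `d+2` points on the moment curve `t ↦ (t, t², …, t^d)` at `t = 1,…,d+2`,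
whose convex hull is the cyclic polytope `C(d, d+2)`. -/
def cyc (d : ℕ) (ℓ : Fin (d+2)) : Fin d → ℝ := fun k => ((ℓ:ℝ)+1)^((k:ℕ)+1)

open Finset

section AffineDependence

variable (K : Type*) {ι E : Type*} [Field K] [Fintype ι] [AddCommGroup E] [Module K E]

def affineDependences (v : ι → E) : Submodule K (ι → K) :=
  LinearMap.ker (Fintype.linearCombination K fun i => (v i, (1 : K)))

variable {K}

theorem mem_affineDependences {v : ι → E} {w : ι → K} :
    w ∈ affineDependences K v ↔ ∑ i, w i = 0 ∧ ∑ i, w i • v i = 0 := by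
  simp [affineDependences, Fintype.linearCombination_apply, Prod.ext_iff, Prod.fst_sum,
    Prod.snd_sum, and_comm]

theorem affineDependences_eq_span_singleton {v : ι → E} {c : ι → K} (k : ι)
    (hc : c ∈ affineDependences K v) (hck : c k ≠ 0)
    (h : ∀ w ∈ affineDependences K v, w k = 0 → w = 0) :
    affineDependences K v = K ∙ c := by
  refine le_antisymm (fun w hw => ?_) ((Submodule.span_singleton_le_iff_mem _ _).2 hc)
  have hw' := h (w - (w k / c k) • c) (sub_mem hw (Submodule.smul_mem _ _ hc)) (by
    simp [hck])
  exact Submodule.mem_span_singleton.2 ⟨w k / c k, (sub_eq_zero.1 hw').symm⟩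

theorem exists_dual_add_eq_of_sum_mul_eq_zero {v : ι → E} {c : ι → K}
    (hc : affineDependences K v = K ∙ c) {u : ι → K} (hu : ∑ i, c i * u i = 0) :
    ∃ (g : Module.Dual K E) (a : K), ∀ i, g (v i) + a = u i := by
  classical
  set M := Fintype.linearCombination K fun i => (v i, (1 : K))
  have hφ : Fintype.linearCombination K u ∈ (LinearMap.ker M).dualAnnihilator := by
    rw [Submodule.mem_dualAnnihilator]
    intro w hw
    change w ∈ affineDependences K v at hw
    obtain ⟨t, rfl⟩ := Submodule.mem_span_singleton.1 (hc ▸ hw)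
    simp [Fintype.linearCombination_apply, hu]
  rw [← LinearMap.range_dualMap_eq_dualAnnihilator_ker] at hφ
  obtain ⟨ψ, hψ⟩ := hφ
  refine ⟨ψ.comp (LinearMap.inl K E K), ψ (0, 1), fun i => ?_⟩
  have := LinearMap.congr_fun hψ (Pi.single i 1)
  simp only [LinearMap.dualMap_apply, M, Fintype.linearCombination_apply_single, one_smul] at this
  rw [LinearMap.comp_apply, LinearMap.inl_apply, ← map_add, Prod.mk_add_mk, add_zero, zero_add,
    this]

theorem sum_posPart_eq_sum_negPart [LinearOrder K] [IsStrictOrderedRing K] {v : ι → E}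
    {c : ι → K} (hc : c ∈ affineDependences K v) :
    ∑ i, (c i)⁺ = ∑ i, (c i)⁻ ∧ ∑ i, (c i)⁺ • v i = ∑ i, (c i)⁻ • v i := by
  obtain ⟨h₀, h₁⟩ := mem_affineDependences.1 hc
  refine ⟨sub_eq_zero.1 ?_, sub_eq_zero.1 ?_⟩
  · simpa only [← sum_sub_distrib, posPart_sub_negPart] using h₀
  · simpa only [← sum_sub_distrib, ← sub_smul, posPart_sub_negPart] using h₁

end AffineDependence

section ConvexHull

variable {𝕜 ι E : Type*} [Field 𝕜] [LinearOrder 𝕜] [IsStrictOrderedRing 𝕜] [Fintype ι]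
  [AddCommGroup E] [Module 𝕜 E]

theorem mem_convexHull_image_iff {v : ι → E} {S : Set ι} {x : E} :
    x ∈ convexHull 𝕜 (v '' S) ↔ ∃ w : ι → 𝕜, (∀ i, 0 ≤ w i) ∧ (∀ i ∉ S, w i = 0) ∧
      ∑ i, w i = 1 ∧ ∑ i, w i • v i = x := by
  classical
  refine ⟨fun hx => ?_, ?_⟩
  · suffices h : convexHull 𝕜 (v '' S) ⊆ {y | ∃ w : ι → 𝕜, (∀ i, 0 ≤ w i) ∧
        (∀ i ∉ S, w i = 0) ∧ ∑ i, w i = 1 ∧ ∑ i, w i • v i = y} from h hx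
    refine convexHull_min ?_ ?_
    · rintro _ ⟨i, hi, rfl⟩
      refine ⟨Pi.single i 1, fun j => ?_, fun j hj => ?_, by simp, by simp [Pi.single_apply]⟩
      · by_cases h : j = i <;> simp [h]
      · simp [show j ≠ i by rintro rfl; exact hj hi]
    · rintro _ ⟨w, hw₀, hwS, hw₁, rfl⟩ _ ⟨w', hw₀', hwS', hw₁', rfl⟩ a b ha hb hab
      refine ⟨a • w + b • w', fun i => ?_, fun i hi => ?_, ?_, ?_⟩
      · simp only [Pi.add_apply, Pi.smul_apply, smul_eq_mul]
        exact add_nonneg (mul_nonneg ha (hw₀ i)) (mul_nonneg hb (hw₀' i))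
      · simp [hwS i hi, hwS' i hi]
      · simp [sum_add_distrib, ← mul_sum, hw₁, hw₁', hab]
      · simp [add_smul, sum_add_distrib, mul_smul, smul_sum]
  · rintro ⟨w, hw₀, hwS, hw₁, rfl⟩
    rw [← sum_filter_of_ne fun i _ h => not_not.1 fun hi => h (by rw [hwS i hi, zero_smul])]
    refine (convex_convexHull 𝕜 _).sum_mem (fun i _ => hw₀ i) ?_ fun i hi =>
      subset_convexHull 𝕜 _ ⟨i, (mem_filter.1 hi).2, rfl⟩
    rw [sum_filter_of_ne fun i _ h => not_not.1 fun hi => h (hwS i hi), hw₁]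

theorem mem_convexHull_range_iff {v : ι → E} {x : E} :
    x ∈ convexHull 𝕜 (Set.range v) ↔
      ∃ w : ι → 𝕜, (∀ i, 0 ≤ w i) ∧ ∑ i, w i = 1 ∧ ∑ i, w i • v i = x := by
  simp [← Set.image_univ, mem_convexHull_image_iff]

end ConvexHull

theorem exists_sum_mul_eq_zero_of_exists_pos_of_exists_neg {ι : Type*} [Fintype ι]
    {c : ι → ℝ} {S : Set ι} (hpos : ∃ i ∉ S, 0 < c i) (hneg : ∃ j ∉ S, c j < 0) :
    ∃ u : ι → ℝ, (∀ i ∈ S, u i = 0) ∧ (∀ i ∉ S, u i < 0) ∧ ∑ i, c i * u i = 0 := by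
  classical
  set u₀ : ι → ℝ := fun i => if i ∈ S then 0 else -1
  set r := ∑ i, c i * u₀ i
  -- correct `u₀` at an index outside `S` whose coefficient has the sign of `r`
  obtain ⟨k, hkS, hck, hrk⟩ : ∃ k ∉ S, c k ≠ 0 ∧ 0 ≤ r / c k := by
    obtain ⟨i, hiS, hi⟩ := hpos
    obtain ⟨j, hjS, hj⟩ := hneg
    rcases le_total 0 r with hr | hr
    · exact ⟨i, hiS, hi.ne', div_nonneg hr hi.le⟩
    · exact ⟨j, hjS, hj.ne, div_nonneg_of_nonpos hr hj.le⟩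
  refine ⟨u₀ - (r / c k) • Pi.single k 1, fun i hi => ?_, fun i hi => ?_, ?_⟩
  · simp [u₀, hi, show i ≠ k by rintro rfl; exact hkS hi]
  · by_cases h : i = k
    · subst h
      simp only [u₀, Pi.sub_apply, Pi.smul_apply, Pi.single_eq_same, hi, if_false, smul_eq_mul,
        mul_one]
      linarith
    · simp [u₀, hi, h]
  · simp [mul_sub, sum_sub_distrib, Pi.single_apply, r, mul_div_cancel₀ _ hck]

section Exposed

variable {ι E : Type*} [Fintype ι] [AddCommGroup E] [Module ℝ E] [TopologicalSpace E]

theorem IsExposed.mem_of_sum_smul_mem {A B : Set E} (hAB : IsExposed ℝ A B) {w : ι → ℝ}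
    {z : ι → E} (hw₀ : ∀ i, 0 ≤ w i) (hw₁ : ∑ i, w i = 1) (hz : ∀ i, z i ∈ A)
    (hB : ∑ i, w i • z i ∈ B) {j : ι} (hj : 0 < w j) : z j ∈ B := by
  obtain ⟨l, rfl⟩ := hAB ⟨_, hB⟩
  have hle : ∀ i, l (z i) ≤ l (∑ i, w i • z i) := fun i => hB.2 _ (hz i)
  have hsum : ∑ i, w i * (l (∑ i, w i • z i) - l (z i)) = 0 := by
    simp [mul_sub, ← sum_mul, hw₁]
  have hzero := (sum_eq_zero_iff_of_nonneg fun i _ =>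
    mul_nonneg (hw₀ i) (sub_nonneg.2 (hle i))).1 hsum j (mem_univ j)
  rw [mul_eq_zero, sub_eq_zero] at hzero
  exact ⟨hz j, fun y hy => (hB.2 y hy).trans (hzero.resolve_left hj.ne').le⟩

theorem isExposed_convexHull_image_of_eq_of_lt {v : ι → E} {S : Set ι} (l : StrongDual ℝ E)
    (a : ℝ) (hS : ∀ i ∈ S, l (v i) = a) (hSc : ∀ i ∉ S, l (v i) < a) :
    IsExposed ℝ (convexHull ℝ (Set.range v)) (convexHull ℝ (v '' S)) := by
  have hl : ∀ w : ι → ℝ, ∑ i, w i = 1 → l (∑ i, w i • v i) = a - ∑ i, w i * (a - l (v i)) := by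
    intro w hw₁
    simp [mul_sub, ← sum_mul, hw₁]
  have hgap : ∀ i, 0 ≤ a - l (v i) := fun i => sub_nonneg.2 <| by
    by_cases hi : i ∈ S
    · exact (hS i hi).le
    · exact (hSc i hi).le
  have hle : ∀ y ∈ convexHull ℝ (Set.range v), l y ≤ a := by
    intro y hy
    obtain ⟨w, hw₀, hw₁, rfl⟩ := mem_convexHull_range_iff.1 hy
    rw [hl w hw₁, sub_le_self_iff]
    exact sum_nonneg fun i _ => mul_nonneg (hw₀ i) (hgap i)
  have heq : ∀ x ∈ convexHull ℝ (v '' S), l x = a := by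
    intro x hx
    obtain ⟨w, -, hwS, hw₁, rfl⟩ := mem_convexHull_image_iff.1 hx
    rw [hl w hw₁, sub_eq_self]
    refine sum_eq_zero fun i _ => ?_
    by_cases hi : i ∈ S
    · rw [hS i hi, sub_self, mul_zero]
    · rw [hwS i hi, zero_mul]
  rintro ⟨x₀, hx₀⟩
  refine ⟨l, Set.ext fun x => ⟨fun hx => ?_, fun ⟨hxA, hmax⟩ => ?_⟩⟩
  · exact ⟨convexHull_mono (Set.image_subset_range v S) hx,
      fun y hy => (hle y hy).trans (heq x hx).ge⟩
  · obtain ⟨w, hw₀, hw₁, rfl⟩ := mem_convexHull_range_iff.1 hxA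
    have hzero : ∑ i, w i * (a - l (v i)) = 0 := by
      have := hmax x₀ (convexHull_mono (Set.image_subset_range v S) hx₀)
      rw [heq x₀ hx₀, hl w hw₁] at this
      exact le_antisymm (by linarith) (sum_nonneg fun i _ => mul_nonneg (hw₀ i) (hgap i))
    refine mem_convexHull_image_iff.2 ⟨w, hw₀, fun i hi => ?_, hw₁, rfl⟩
    have := (sum_eq_zero_iff_of_nonneg fun i _ => mul_nonneg (hw₀ i) (hgap i)).1 hzero i
      (mem_univ i)
    exact (mul_eq_zero.1 this).resolve_right (sub_ne_zero.2 (hSc i hi).ne')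

variable {v : ι → E} {c : ι → ℝ}

theorem not_isExposed_convexHull_image (hc : affineDependences ℝ v = ℝ ∙ c)
    (hneg : ∃ j k, j ≠ k ∧ c j < 0 ∧ c k < 0) {S : Set ι} (hS : S ≠ Set.univ)
    (hSc : ∀ j ∉ S, c j < 0) :
    ¬ IsExposed ℝ (convexHull ℝ (Set.range v)) (convexHull ℝ (v '' S)) := by
  classical
  intro hexp
  have hcdep : c ∈ affineDependences ℝ v := hc ▸ Submodule.mem_span_singleton_self c
  obtain ⟨j, hjS⟩ := Set.ne_univ_iff_exists_notMem S |>.1 hS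
  obtain ⟨k, hkj, hk⟩ : ∃ k, k ≠ j ∧ c k < 0 := by
    obtain ⟨k₁, k₂, hne, hk₁, hk₂⟩ := hneg
    by_cases h : k₁ = j
    · exact ⟨k₂, h ▸ hne.symm, hk₂⟩
    · exact ⟨k₁, h, hk₁⟩
  obtain ⟨hsum, hsmul⟩ := sum_posPart_eq_sum_negPart hcdep
  set s := ∑ i, (c i)⁻
  have hs : 0 < s := (single_le_sum (fun i _ => negPart_nonneg (c i)) (mem_univ j)).trans_lt' <|
    negPart_pos_iff.2 (hSc j hjS)
  have hradon : ∑ i, ((c i)⁻ / s) • v i ∈ convexHull ℝ (v '' S) := by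
    refine mem_convexHull_image_iff.2 ⟨fun i => (c i)⁺ / s, fun i => by positivity,
      fun i hi => by simp [posPart_eq_zero.2 (hSc i hi).le], ?_, ?_⟩
    · rw [← sum_div, hsum, div_self hs.ne']
    · simp_rw [div_eq_inv_mul, mul_smul, ← smul_sum, hsmul]
  have hvj := hexp.mem_of_sum_smul_mem (fun i => by positivity)
    (by rw [← sum_div, div_self hs.ne']) (fun i => subset_convexHull ℝ _ ⟨i, rfl⟩) hradon
    (j := j) (div_pos (negPart_pos_iff.2 (hSc j hjS)) hs)
  obtain ⟨μ, hμ₀, hμS, hμ₁, hμv⟩ := mem_convexHull_image_iff.1 hvj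
  have hdep : μ - Pi.single j 1 ∈ affineDependences ℝ v := by
    rw [mem_affineDependences]
    simp [sub_smul, sum_sub_distrib, hμ₁, hμv]
  obtain ⟨t, ht⟩ := Submodule.mem_span_singleton.1 (hc ▸ hdep)
  have htj := congrFun ht j
  have htk := congrFun ht k
  simp only [Pi.smul_apply, smul_eq_mul, Pi.sub_apply, Pi.single_eq_same, hμS j hjS,
    Pi.single_eq_of_ne hkj] at htj htk
  nlinarith [hμ₀ k, hSc j hjS]

theorem isExposed_convexHull_image_of_exists_pos_of_exists_neg [IsTopologicalAddGroup E]
    [ContinuousSMul ℝ E] [T2Space E] [FiniteDimensional ℝ E]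
    (hc : affineDependences ℝ v = ℝ ∙ c) {S : Set ι} (hpos : ∃ i ∉ S, 0 < c i)
    (hneg : ∃ j ∉ S, c j < 0) :
    IsExposed ℝ (convexHull ℝ (Set.range v)) (convexHull ℝ (v '' S)) := by
  obtain ⟨u, huS, huSc, hcu⟩ := exists_sum_mul_eq_zero_of_exists_pos_of_exists_neg hpos hneg
  obtain ⟨g, a, hg⟩ := exists_dual_add_eq_of_sum_mul_eq_zero hc hcu
  refine isExposed_convexHull_image_of_eq_of_lt (LinearMap.toContinuousLinearMap g) (-a)
    (fun i hi => ?_) fun i hi => ?_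
  · change g (v i) = -a
    linarith [hg i, huS i hi]
  · change g (v i) < -a
    linarith [hg i, huSc i hi]

theorem isExposed_convexHull_image_iff [IsTopologicalAddGroup E] [ContinuousSMul ℝ E]
    [T2Space E] [FiniteDimensional ℝ E] (hc : affineDependences ℝ v = ℝ ∙ c)
    (hc₀ : ∀ i, c i ≠ 0) (hpos : ∃ i j, i ≠ j ∧ 0 < c i ∧ 0 < c j)
    (hneg : ∃ i j, i ≠ j ∧ c i < 0 ∧ c j < 0) (S : Set ι) :
    IsExposed ℝ (convexHull ℝ (Set.range v)) (convexHull ℝ (v '' S)) ↔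
      S = Set.univ ∨ (∃ i ∉ S, 0 < c i) ∧ ∃ j ∉ S, c j < 0 := by
  refine ⟨fun hexp => or_iff_not_imp_left.2 fun hS => ?_, ?_⟩
  · by_contra! h
    by_cases hSpos : ∃ i ∉ S, 0 < c i
    · refine not_isExposed_convexHull_image (c := -c) ?_ ?_ hS (fun j hj => ?_) hexp
      · rw [hc, ← Set.neg_singleton, Submodule.span_neg]
      · obtain ⟨i, j, hij, hi, hj⟩ := hpos
        exact ⟨i, j, hij, neg_lt_zero.2 hi, neg_lt_zero.2 hj⟩
      · exact neg_lt_zero.2 ((h hSpos j hj).lt_of_ne' (hc₀ j))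
    · exact not_isExposed_convexHull_image hc hneg hS
        (fun j hj => (not_lt.1 fun hj' => hSpos ⟨j, hj, hj'⟩).lt_of_ne (hc₀ j)) hexp
  · rintro (rfl | ⟨hSpos, hSneg⟩)
    · rw [Set.image_univ]
    · exact isExposed_convexHull_image_of_exists_pos_of_exists_neg hc hSpos hSneg

end Exposed

theorem isExposed_convexHull_image_iff_of_alternating {E : Type*} [NormedAddCommGroup E]
    [NormedSpace ℝ E] [FiniteDimensional ℝ E] {d : ℕ} (hd : 2 ≤ d) {v : Fin (d + 2) → E}
    {c : Fin (d + 2) → ℝ} (hc : affineDependences ℝ v = ℝ ∙ c)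
    (halt : ∀ i : Fin (d + 2), 0 < (-1) ^ (i : ℕ) * c i) (S : Set (Fin (d + 2))) :
    IsExposed ℝ (convexHull ℝ (Set.range v)) (convexHull ℝ (v '' S)) ↔
      S = Set.univ ∨ (∃ i ∉ S, Even (i : ℕ)) ∧ ∃ j ∉ S, Odd (j : ℕ) := by
  have hsign : ∀ i, (0 < c i ↔ Even (i : ℕ)) ∧ (c i < 0 ↔ Odd (i : ℕ)) := fun i => by
    have hi := halt i
    rcases Nat.even_or_odd (i : ℕ) with h | h
    · rw [h.neg_one_pow, one_mul] at hi
      exact ⟨iff_of_true hi h, iff_of_false hi.not_gt (Nat.not_odd_iff_even.2 h)⟩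
    · rw [h.neg_one_pow, neg_one_mul, neg_pos] at hi
      exact ⟨iff_of_false hi.not_gt (Nat.not_even_iff_odd.2 h), iff_of_true hi h⟩
  rw [isExposed_convexHull_image_iff hc (fun i h => by simpa [h] using halt i)
    ⟨⟨0, by omega⟩, ⟨2, by omega⟩, by simp, (hsign _).1.2 ⟨0, rfl⟩, (hsign _).1.2 even_two⟩
    ⟨⟨1, by omega⟩, ⟨3, by omega⟩, by simp, (hsign _).2.2 odd_one, (hsign _).2.2 ⟨1, rfl⟩⟩ S]
  simp only [hsign]

theorem bvec_apply (d : ℕ) (ℓ : Fin (d + 2)) (k : Fin d) :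
    bvec d ℓ k
      = (if k.succ.succ = ℓ then (d + 2 : ℝ) else 0) - (-1) ^ (ℓ : ℕ) * (-1) ^ (k : ℕ) := by
  have hk : (k.succ.succ : ℕ) = k + 2 := rfl
  simp only [bvec, Fin.ext_iff, hk, ← pow_add]
  split_ifs with h
  · rw [← h, add_right_comm, ← two_mul, pow_add, pow_mul, neg_one_sq, one_pow, one_mul]
    ring
  · rw [pow_succ, add_comm (ℓ : ℕ)]
    ring

theorem sum_smul_bvec_apply (d : ℕ) (w : Fin (d + 2) → ℝ) (k : Fin d) :
    (∑ ℓ, w ℓ • bvec d ℓ) k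
      = (d + 2) * w k.succ.succ
        - (-1) ^ (k : ℕ) * ∑ ℓ : Fin (d + 2), (-1) ^ (ℓ : ℕ) * w ℓ := by
  simp only [Finset.sum_apply, Pi.smul_apply, smul_eq_mul, bvec_apply, mul_sub, sum_sub_distrib,
    mul_ite, mul_zero, sum_ite_eq, mem_univ, if_true, mul_sum]
  congr 1
  · ring
  · exact sum_congr rfl fun ℓ _ => by ring

theorem affineDependences_bvec {d : ℕ} (he : Even d) :
    affineDependences ℝ (bvec d) = ℝ ∙ fun ℓ : Fin (d + 2) => (-1 : ℝ) ^ (ℓ : ℕ) := by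
  have hd₂ : (d + 2 : ℝ) ≠ 0 := by positivity
  refine affineDependences_eq_span_singleton 0 (mem_affineDependences.2 ⟨?_, ?_⟩) (by simp) ?_
  · rw [Fin.sum_neg_one_pow, if_pos (he.add even_two)]
  · ext k
    have hsq : ∑ ℓ : Fin (d + 2), (-1 : ℝ) ^ (ℓ : ℕ) * (-1) ^ (ℓ : ℕ) = d + 2 := by
      simp [← pow_add, ← two_mul, pow_mul]
    rw [sum_smul_bvec_apply, Pi.zero_apply, hsq, Fin.val_succ, Fin.val_succ]
    ring
  intro w hw hw₀
  obtain ⟨hsum, hsmul⟩ := mem_affineDependences.1 hw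
  set T := ∑ ℓ : Fin (d + 2), (-1) ^ (ℓ : ℕ) * w ℓ with hT
  have hrow : ∀ k : Fin d, (d + 2) * w k.succ.succ = (-1) ^ (k : ℕ) * T := fun k => by
    rw [← sub_eq_zero, ← sum_smul_bvec_apply, hsmul, Pi.zero_apply]
  have htail : (d + 2) * ∑ k : Fin d, w k.succ.succ = 0 := by
    rw [mul_sum]
    simp_rw [hrow, ← sum_mul, Fin.sum_neg_one_pow, if_pos he, zero_mul]
  have hw₁ : w 1 = 0 := by
    rw [Fin.sum_univ_succ, Fin.sum_univ_succ, hw₀, zero_add] at hsum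
    have := (mul_eq_zero.1 htail).resolve_left hd₂
    simpa [this] using hsum
  have hT' : T = ∑ k : Fin d, (-1) ^ (k : ℕ) * w k.succ.succ := by
    rw [hT, Fin.sum_univ_succ, Fin.sum_univ_succ, Fin.succ_zero_eq_one, hw₀, hw₁]
    simp [pow_succ]
  have hT₀ : T = 0 := by
    have hTd : (d + 2) * T = d * T :=
      calc (d + 2) * T = ∑ k : Fin d, (-1) ^ (k : ℕ) * ((d + 2) * w k.succ.succ) := by
            rw [hT', mul_sum]
            exact sum_congr rfl fun k _ => by ring
        _ = d * T := by simp [hrow, ← mul_assoc, ← pow_add, ← two_mul, pow_mul]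
    linarith
  funext ℓ
  refine Fin.cases hw₀ (Fin.cases hw₁ fun k => ?_) ℓ
  simpa [hT₀, hd₂] using hrow k

theorem sum_neg_one_pow_mul_choose_mul_add_one_pow {R : Type*} [CommRing R] {n j : ℕ}
    (hj : j < n) : ∑ k ∈ range (n + 1), (-1 : R) ^ k * n.choose k * ((k : R) + 1) ^ j = 0 := by
  have h := congrFun (fwdDiff_iter_pow_eq_zero_of_lt (R := R) hj) 1
  rw [fwdDiff_iter_eq_sum_shift, Pi.zero_apply] at h
  calc ∑ k ∈ range (n + 1), (-1 : R) ^ k * n.choose k * ((k : R) + 1) ^ j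
      = (-1) ^ n
          * ∑ k ∈ range (n + 1), ((-1 : ℤ) ^ (n - k) * n.choose k) • (1 + k • 1 : R) ^ j := by
        rw [mul_sum]
        refine sum_congr rfl fun k hk => ?_
        obtain ⟨m, rfl⟩ := Nat.exists_eq_add_of_le (mem_range_succ_iff.1 hk)
        have hm : (-1 : R) ^ m * (-1) ^ m = 1 := by rw [← mul_pow, neg_one_mul, neg_neg, one_pow]
        simp only [zsmul_eq_mul, pow_add, add_tsub_cancel_left, add_comm (1 : R), Int.cast_mul,
          Int.cast_pow, Int.cast_neg, Int.cast_one, Int.cast_natCast]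
        linear_combination -((-1) ^ k * ((k + m).choose k : R) * ((k : R) + 1) ^ j) * hm
    _ = 0 := by rw [h, mul_zero]

theorem mem_affineDependences_cyc_iff {d : ℕ} {w : Fin (d + 2) → ℝ} :
    w ∈ affineDependences ℝ (cyc d) ↔
      ∀ j : Fin (d + 1), ∑ ℓ, w ℓ * ((ℓ : ℝ) + 1) ^ (j : ℕ) = 0 := by
  simp [mem_affineDependences, Fin.forall_fin_succ, funext_iff, cyc]

theorem affineDependences_cyc (d : ℕ) :
    affineDependences ℝ (cyc d)
      = ℝ ∙ fun ℓ : Fin (d + 2) => (-1 : ℝ) ^ (ℓ : ℕ) * (d + 1).choose ℓ := by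
  refine affineDependences_eq_span_singleton (Fin.last (d + 1))
    (mem_affineDependences_cyc_iff.2 fun j => ?_) (by simp) fun w hw hlast => ?_
  · rw [Fin.sum_univ_eq_sum_range
      (fun ℓ => (-1 : ℝ) ^ ℓ * (d + 1).choose ℓ * ((ℓ : ℝ) + 1) ^ (j : ℕ))]
    exact sum_neg_one_pow_mul_choose_mul_add_one_pow j.isLt
  have hinit : (fun ℓ : Fin (d + 1) => w ℓ.castSucc) = 0 := by
    refine Matrix.eq_zero_of_forall_pow_sum_mul_pow_eq_zero
      (f := fun ℓ : Fin (d + 1) => (ℓ : ℝ) + 1) (fun a b h => Fin.ext (by simpa using h))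
      fun j => ?_
    simpa [Fin.sum_univ_castSucc, hlast] using mem_affineDependences_cyc_iff.1 hw j
  funext ℓ
  exact Fin.lastCases hlast (fun ℓ => congrFun hinit ℓ) ℓ

/-- for even `d ≥ 2`, the `d`-th Laplacian polytope of `∂σ_{d+1}` is
combinatorially equivalent to the `d`-dimensional cyclic polytope on `d+2`
vertices: there is a bijection of the vertex sets under which the (exposed) faces
spanned by corresponding sets of vertices match up. -/
theorem stmt15 (d : ℕ) (hd : 2 ≤ d) (he : Even d) :
    ∃ e : Fin (d+2) ≃ Fin (d+2), ∀ S : Set (Fin (d+2)),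
      IsExposed ℝ (convexHull ℝ (Set.range (bvec d)))
          (convexHull ℝ (bvec d '' S)) ↔
      IsExposed ℝ (convexHull ℝ (Set.range (cyc d)))
          (convexHull ℝ (cyc d '' (e '' S))) := by
  refine ⟨Equiv.refl _, fun S => ?_⟩
  rw [Equiv.coe_refl, Set.image_id,
    isExposed_convexHull_image_iff_of_alternating hd (affineDependences_bvec he) (fun i => ?_) S,
    isExposed_convexHull_image_iff_of_alternating hd (affineDependences_cyc d) (fun i => ?_) S]
  all_goals
    simp [← mul_assoc, ← pow_add, ← two_mul, pow_mul, Nat.choose_pos, Nat.lt_succ_iff.1 i.isLt]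
end

section
/- Let d ≥ 2 be even and let Q = conv(c^{(1)},...,c^{(d+2)}) ⊂ ℝ^d where c^{(ℓ)}_k = (d+2)/2 if k = ℓ−2 and c^{(ℓ)}_k = max(0, (-1)^{k+ℓ-1}) otherwise. Then Q − 𝟙 is a reflexive lattice polytope; in particular 𝟙 is the unique interior lattice point of Q. -/
open Matrix

/-- The vertices `c^{(ℓ)} ∈ ℝ^d` of the interior polytope `Q`:
`c^{(ℓ)}_k = (d+2)/2` if `k = ℓ-2` and `c^{(ℓ)}_k = max(0, (-1)^{k+ℓ-1})`
otherwise (1-indexed; 0-indexed as in `bvec`). -/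
noncomputable def cvec (d : ℕ) (ℓ : Fin (d+2)) : Fin d → ℝ := fun k =>
  if (k:ℕ) + 2 = (ℓ:ℕ) then (d+2 : ℝ)/2 else max 0 ((-1 : ℝ)^((k:ℕ)+(ℓ:ℕ)+1))

namespace S17

def ge' (d n p : ℕ) (k : Fin d) : ℤ :=
  if (k:ℕ) % 2 = 0 then (if p = n then 1 else if (k:ℕ) = 2*p then -1 else 0) else 0

def go' (d n q : ℕ) (k : Fin d) : ℤ :=
  if (k:ℕ) % 2 = 1 then (if q = n then 1 else if (k:ℕ) = 2*q+1 then -1 else 0) else 0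

def Amat (d n : ℕ) (i : Fin ((n+1)*(n+1))) (k : Fin d) : ℤ :=
  ge' d n ((i:ℕ)/(n+1)) k + go' d n ((i:ℕ)%(n+1)) k

noncomputable def Fe (d n p : ℕ) (x : Fin d → ℝ) : ℝ := ∑ k, (ge' d n p k : ℝ) * x k
noncomputable def Fo (d n q : ℕ) (x : Fin d → ℝ) : ℝ := ∑ k, (go' d n q k : ℝ) * x k

lemma rowsum (d n : ℕ) (i : Fin ((n+1)*(n+1))) (x : Fin d → ℝ) :
    ∑ k, (Amat d n i k : ℝ) * x k = Fe d n ((i:ℕ)/(n+1)) x + Fo d n ((i:ℕ)%(n+1)) x := by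
  unfold Amat Fe Fo
  rw [← Finset.sum_add_distrib]
  apply Finset.sum_congr rfl
  intro k _
  push_cast
  ring

lemma Fe_lt (d n p : ℕ) (hp : p < n) (hd : d = 2*n) (x : Fin d → ℝ) :
    Fe d n p x = -x ⟨2*p, by omega⟩ := by
  unfold Fe ge'
  rw [Finset.sum_eq_single (⟨2*p, by omega⟩ : Fin d)]
  · have h0 : (2*p) % 2 = 0 := by omega
    simp [h0, hp.ne]
  · intro k _ hk
    have hk' : (k:ℕ) ≠ 2*p := fun h => hk (Fin.ext h)
    by_cases h1 : (k:ℕ) % 2 = 0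
    · simp [h1, hp.ne, hk']
    · simp [h1]
  · simp

lemma Fe_n (d n : ℕ) (x : Fin d → ℝ) :
    Fe d n n x = ∑ k : Fin d, (if (k:ℕ) % 2 = 0 then x k else 0) := by
  unfold Fe ge'
  apply Finset.sum_congr rfl
  intro k _
  by_cases h1 : (k:ℕ) % 2 = 0 <;> simp [h1]

lemma Fo_lt (d n q : ℕ) (hq : q < n) (hd : d = 2*n) (x : Fin d → ℝ) :
    Fo d n q x = -x ⟨2*q+1, by omega⟩ := by
  unfold Fo go'
  rw [Finset.sum_eq_single (⟨2*q+1, by omega⟩ : Fin d)]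
  · have h0 : (2*q+1) % 2 = 1 := by omega
    simp [h0, hq.ne]
  · intro k _ hk
    have hk' : (k:ℕ) ≠ 2*q+1 := fun h => hk (Fin.ext h)
    by_cases h1 : (k:ℕ) % 2 = 1
    · simp [h1, hq.ne, hk']
    · simp [h1]
  · simp

lemma Fo_n (d n : ℕ) (x : Fin d → ℝ) :
    Fo d n n x = ∑ k : Fin d, (if (k:ℕ) % 2 = 1 then x k else 0) := by
  unfold Fo go'
  apply Finset.sum_congr rfl
  intro k _
  by_cases h1 : (k:ℕ) % 2 = 1 <;> simp [h1]

lemma cvec_sub_one (d n : ℕ) (hd : d = 2*n) (ℓ : Fin (d+2)) (k : Fin d) :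
    cvec d ℓ k - 1 = (if (k:ℕ)+2 = (ℓ:ℕ) then ((n:ℝ)+1) else 0)
      + (if ((k:ℕ)+(ℓ:ℕ)) % 2 = 0 then (-1:ℝ) else 0) := by
  unfold cvec
  by_cases h : (k:ℕ)+2 = (ℓ:ℕ)
  · have h2 : ((k:ℕ)+(ℓ:ℕ)) % 2 = 0 := by omega
    rw [if_pos h, if_pos h, if_pos h2]
    subst hd; push_cast; ring
  · rw [if_neg h, if_neg h]
    by_cases h2 : ((k:ℕ)+(ℓ:ℕ)) % 2 = 0
    · have ho : Odd ((k:ℕ)+(ℓ:ℕ)+1) := by rw [Nat.odd_iff]; omega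
      rw [if_pos h2, ho.neg_one_pow]
      norm_num
    · have ho : Even ((k:ℕ)+(ℓ:ℕ)+1) := by rw [Nat.even_iff]; omega
      rw [if_neg h2, ho.neg_one_pow]
      norm_num

lemma sum_range_parity (n : ℕ) (a b : ℝ) :
    ∑ k ∈ Finset.range (2*n), (if k % 2 = 0 then a else b) = n*a + n*b := by
  induction n with
  | zero => simp
  | succ n ih =>
    have : 2*(n+1) = (2*n+1)+1 := by ring
    rw [this, Finset.sum_range_succ, Finset.sum_range_succ, ih]
    have h1 : (2*n) % 2 = 0 := by omega
    have h2 : (2*n+1) % 2 ≠ 0 := by omega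
    rw [if_pos h1, if_neg h2]
    push_cast; ring

lemma sum_fin_parity (d n : ℕ) (hd : d = 2*n) (a b : ℝ) :
    ∑ k : Fin d, (if (k:ℕ) % 2 = 0 then a else b) = n*a + n*b := by
  subst hd
  rw [Fin.sum_univ_eq_sum_range (fun k => if k % 2 = 0 then a else b) (2*n)]
  exact sum_range_parity n a b



lemma sum_spike (d n : ℕ) (hd : d = 2*n) (r : ℕ) (ℓ : Fin (d+2)) :
    ∑ k : Fin d, (if (k:ℕ) % 2 = r ∧ (k:ℕ)+2 = (ℓ:ℕ) then ((n:ℝ)+1) else 0)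
      = if (ℓ:ℕ) % 2 = r ∧ 2 ≤ (ℓ:ℕ) then (n:ℝ)+1 else 0 := by
  by_cases hc : (ℓ:ℕ) % 2 = r ∧ 2 ≤ (ℓ:ℕ)
  · rw [if_pos hc]
    have hlt : (ℓ:ℕ) - 2 < d := by have := ℓ.isLt; omega
    rw [Finset.sum_eq_single (⟨(ℓ:ℕ)-2, hlt⟩ : Fin d)]
    · rw [if_pos (⟨by simp; omega, by simp; omega⟩ : _ ∧ _)]
    · intro k _ hk
      rw [if_neg]
      rintro ⟨h1, h2⟩
      exact hk (Fin.ext (by simp; omega))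
    · simp
  · rw [if_neg hc]
    apply Finset.sum_eq_zero
    intro k _
    rw [if_neg]
    rintro ⟨h1, h2⟩
    exact hc ⟨by omega, by omega⟩

lemma sum_base (d n : ℕ) (hd : d = 2*n) (r : ℕ) (hr : r < 2) (ℓ : Fin (d+2)) :
    ∑ k : Fin d, (if (k:ℕ) % 2 = r ∧ ((k:ℕ)+(ℓ:ℕ)) % 2 = 0 then (-1:ℝ) else 0)
      = if (ℓ:ℕ) % 2 = r then -(n:ℝ) else 0 := by
  by_cases hℓ : (ℓ:ℕ) % 2 = r
  · rw [if_pos hℓ]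
    have key : ∀ k : Fin d, (if (k:ℕ) % 2 = r ∧ ((k:ℕ)+(ℓ:ℕ)) % 2 = 0 then (-1:ℝ) else 0)
        = (if (k:ℕ) % 2 = 0 then (if r = 0 then (-1:ℝ) else 0) else (if r = 0 then 0 else (-1:ℝ))) := by
      intro k
      rcases (by omega : r = 0 ∨ r = 1) with h | h <;> subst h
      · by_cases h : (k:ℕ) % 2 = 0
        · rw [if_pos ⟨h, by omega⟩, if_pos h, if_pos rfl]
        · rw [if_neg (by omega), if_neg h, if_pos rfl]
      · by_cases h : (k:ℕ) % 2 = 0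
        · rw [if_neg (by omega), if_pos h, if_neg (by omega)]
        · rw [if_pos ⟨by omega, by omega⟩, if_neg h, if_neg (by omega)]
    rw [Finset.sum_congr rfl (fun k _ => key k), sum_fin_parity d n hd _ _]
    rcases (by omega : r = 0 ∨ r = 1) with h | h <;> subst h <;> simp
  · rw [if_neg hℓ]
    apply Finset.sum_eq_zero
    intro k _
    rw [if_neg]
    rintro ⟨h1, h2⟩
    omega

lemma vert_le_one (d n : ℕ) (hd : d = 2*n) (ℓ : Fin (d+2)) (k : Fin d)
    (h : ((k:ℕ)+(ℓ:ℕ)) % 2 = 0) : -(cvec d ℓ k - 1) ≤ 1 := by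
  rw [cvec_sub_one d n hd ℓ k, if_pos h]
  have hn : (0:ℝ) ≤ (n:ℝ) := Nat.cast_nonneg n
  split_ifs with h1 <;> linarith

lemma vert_le_zero (d n : ℕ) (hd : d = 2*n) (ℓ : Fin (d+2)) (k : Fin d)
    (h : ((k:ℕ)+(ℓ:ℕ)) % 2 = 1) : -(cvec d ℓ k - 1) ≤ 0 := by
  rw [cvec_sub_one d n hd ℓ k, if_neg (by omega), if_neg (by omega)]
  norm_num

lemma Fe_vert (d n : ℕ) (hd : d = 2*n) (p : Fin (n+1)) (ℓ : Fin (d+2)) :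
    Fe d n (p:ℕ) (fun k => cvec d ℓ k - 1) ≤ (if (ℓ:ℕ) % 2 = 0 then 1 else 0) := by
  rcases Nat.lt_or_ge (p:ℕ) n with hp | hp
  · rw [Fe_lt d n (p:ℕ) hp hd]
    by_cases hℓ : (ℓ:ℕ) % 2 = 0
    · rw [if_pos hℓ]
      exact vert_le_one d n hd ℓ ⟨2*(p:ℕ), by omega⟩ (by simp; omega)
    · rw [if_neg hℓ]
      exact vert_le_zero d n hd ℓ ⟨2*(p:ℕ), by omega⟩ (by simp; omega)
  · have hp' : (p:ℕ) = n := by have := p.isLt; omega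
    rw [hp', Fe_n]
    have key : ∀ k : Fin d, (if (k:ℕ) % 2 = 0 then (fun k => cvec d ℓ k - 1) k else 0)
        = (if (k:ℕ) % 2 = 0 ∧ (k:ℕ)+2 = (ℓ:ℕ) then ((n:ℝ)+1) else 0)
          + (if (k:ℕ) % 2 = 0 ∧ ((k:ℕ)+(ℓ:ℕ)) % 2 = 0 then (-1:ℝ) else 0) := by
      intro k
      by_cases h : (k:ℕ) % 2 = 0
      · rw [if_pos h]
        simp only
        rw [cvec_sub_one d n hd ℓ k]
        by_cases h1 : (k:ℕ)+2 = (ℓ:ℕ) <;> by_cases h2 : ((k:ℕ)+(ℓ:ℕ)) % 2 = 0 <;>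
          simp [h, h1, h2]
      · rw [if_neg h, if_neg (fun hc => h hc.1), if_neg (fun hc => h hc.1)]
        norm_num
    rw [Finset.sum_congr rfl (fun k _ => key k), Finset.sum_add_distrib,
      sum_spike d n hd 0 ℓ, sum_base d n hd 0 (by omega) ℓ]
    have hn : (0:ℝ) ≤ (n:ℝ) := Nat.cast_nonneg n
    split_ifs <;> first | (exfalso; omega) | linarith

lemma Fo_vert (d n : ℕ) (hd : d = 2*n) (q : Fin (n+1)) (ℓ : Fin (d+2)) :
    Fo d n (q:ℕ) (fun k => cvec d ℓ k - 1) ≤ (if (ℓ:ℕ) % 2 = 1 then 1 else 0) := by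
  rcases Nat.lt_or_ge (q:ℕ) n with hq | hq
  · rw [Fo_lt d n (q:ℕ) hq hd]
    by_cases hℓ : (ℓ:ℕ) % 2 = 1
    · rw [if_pos hℓ]
      exact vert_le_one d n hd ℓ ⟨2*(q:ℕ)+1, by omega⟩ (by simp; omega)
    · rw [if_neg hℓ]
      exact vert_le_zero d n hd ℓ ⟨2*(q:ℕ)+1, by omega⟩ (by simp; omega)
  · have hq' : (q:ℕ) = n := by have := q.isLt; omega
    rw [hq', Fo_n]
    have key : ∀ k : Fin d, (if (k:ℕ) % 2 = 1 then (fun k => cvec d ℓ k - 1) k else 0)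
        = (if (k:ℕ) % 2 = 1 ∧ (k:ℕ)+2 = (ℓ:ℕ) then ((n:ℝ)+1) else 0)
          + (if (k:ℕ) % 2 = 1 ∧ ((k:ℕ)+(ℓ:ℕ)) % 2 = 0 then (-1:ℝ) else 0) := by
      intro k
      by_cases h : (k:ℕ) % 2 = 1
      · rw [if_pos h]
        simp only
        rw [cvec_sub_one d n hd ℓ k]
        by_cases h1 : (k:ℕ)+2 = (ℓ:ℕ) <;> by_cases h2 : ((k:ℕ)+(ℓ:ℕ)) % 2 = 0 <;>
          simp [h, h1, h2]
      · rw [if_neg h, if_neg (fun hc => h hc.1), if_neg (fun hc => h hc.1)]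
        norm_num
    rw [Finset.sum_congr rfl (fun k _ => key k), Finset.sum_add_distrib,
      sum_spike d n hd 1 ℓ, sum_base d n hd 1 (by omega) ℓ]
    have hn : (0:ℝ) ≤ (n:ℝ) := Nat.cast_nonneg n
    split_ifs <;> first | (exfalso; omega) | linarith

lemma row_vert (d n : ℕ) (hd : d = 2*n) (i : Fin ((n+1)*(n+1))) (ℓ : Fin (d+2)) :
    ∑ k, (Amat d n i k : ℝ) * (cvec d ℓ k - 1) ≤ 1 := by
  have hp : (i:ℕ)/(n+1) < n+1 := Nat.div_lt_of_lt_mul i.isLt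
  have hq : (i:ℕ)%(n+1) < n+1 := Nat.mod_lt _ (by omega)
  have h := rowsum d n i (fun k => cvec d ℓ k - 1)
  rw [h]
  have h1 := Fe_vert d n hd ⟨(i:ℕ)/(n+1), hp⟩ ℓ
  have h2 := Fo_vert d n hd ⟨(i:ℕ)%(n+1), hq⟩ ℓ
  simp only [Fin.val_mk] at h1 h2
  by_cases hℓ : (ℓ:ℕ) % 2 = 0
  · rw [if_pos hℓ] at h1
    rw [if_neg (by omega)] at h2
    linarith
  · rw [if_neg hℓ] at h1
    rw [if_pos (by omega)] at h2
    linarith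

noncomputable def wt (d n : ℕ) (x : Fin d → ℝ) (t : ℝ) (ℓ : Fin (d+2)) : ℝ :=
  if h0 : (ℓ:ℕ) = 0 then (t - Fe d n n x)/(n+1)
  else if h1 : (ℓ:ℕ) = 1 then ((1-t) - Fo d n n x)/(n+1)
  else (x ⟨(ℓ:ℕ)-2, by have := ℓ.isLt; omega⟩ + (if (ℓ:ℕ) % 2 = 0 then t else 1-t))/(n+1)

lemma wt_succsucc (d n : ℕ) (x : Fin d → ℝ) (t : ℝ) (k : Fin d) :
    wt d n x t k.succ.succ = (x k + (if (k:ℕ) % 2 = 0 then t else 1-t))/(n+1) := by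
  have hv : ((k.succ.succ : Fin (d+2)) : ℕ) = (k:ℕ) + 2 := rfl
  unfold wt
  rw [dif_neg (show ¬((k.succ.succ : Fin (d+2)):ℕ) = 0 by rw [hv]; omega),
    dif_neg (show ¬((k.succ.succ : Fin (d+2)):ℕ) = 1 by rw [hv]; omega)]
  have h1 : (⟨((k.succ.succ : Fin (d+2)):ℕ)-2, by have := (k.succ.succ : Fin (d+2)).isLt; rw [hv]; omega⟩ : Fin d) = k := by
    apply Fin.ext; simp [hv]
  rw [h1]
  congr 2
  rw [hv]
  by_cases h : (k:ℕ) % 2 = 0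
  · rw [if_pos h, if_pos (by omega)]
  · rw [if_neg h, if_neg (by omega)]

lemma ite_split (c : Prop) [Decidable c] (a b : ℝ) :
    (if c then a + b else 0) = (if c then a else 0) + (if c then b else 0) := by
  split_ifs <;> simp

lemma wt_even_sum (d n : ℕ) (hd : d = 2*n) (x : Fin d → ℝ) (t : ℝ) :
    ∑ ℓ : Fin (d+2), (if (ℓ:ℕ) % 2 = 0 then wt d n x t ℓ else 0) = t := by
  rw [Fin.sum_univ_succ, Fin.sum_univ_succ]
  have hv0 : ((0 : Fin (d+2)) : ℕ) = 0 := rfl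
  have hv1 : (((0 : Fin (d+1)).succ : Fin (d+2)) : ℕ) = 1 := rfl
  have key : ∀ k : Fin d, (if (((k.succ.succ : Fin (d+2))):ℕ) % 2 = 0 then wt d n x t k.succ.succ else 0)
      = ((if (k:ℕ) % 2 = 0 then x k else 0) + (if (k:ℕ) % 2 = 0 then t else 0))/(n+1) := by
    intro k
    have hv : ((k.succ.succ : Fin (d+2)) : ℕ) = (k:ℕ) + 2 := rfl
    rw [hv, wt_succsucc]
    by_cases h : (k:ℕ) % 2 = 0
    · rw [if_pos (by omega), if_pos h, if_pos h, if_pos h]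
    · rw [if_neg (by omega), if_neg h, if_neg h]
      norm_num
  rw [Finset.sum_congr rfl (fun k _ => key k), ← Finset.sum_div, Finset.sum_add_distrib,
    sum_fin_parity d n hd t 0]
  rw [if_pos (show ((0 : Fin (d+2)):ℕ) % 2 = 0 by rw [hv0]),
    if_neg (show ¬(((0 : Fin (d+1)).succ : Fin (d+2)):ℕ) % 2 = 0 by rw [hv1]; omega)]
  unfold wt
  rw [dif_pos hv0, Fe_n]
  have hnn : ((n:ℝ)+1) ≠ 0 := by positivity
  field_simp
  ring

lemma wt_odd_sum (d n : ℕ) (hd : d = 2*n) (x : Fin d → ℝ) (t : ℝ) :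
    ∑ ℓ : Fin (d+2), (if (ℓ:ℕ) % 2 = 1 then wt d n x t ℓ else 0) = 1 - t := by
  rw [Fin.sum_univ_succ, Fin.sum_univ_succ]
  have hv0 : ((0 : Fin (d+2)) : ℕ) = 0 := rfl
  have hv1 : (((0 : Fin (d+1)).succ : Fin (d+2)) : ℕ) = 1 := rfl
  have key : ∀ k : Fin d, (if (((k.succ.succ : Fin (d+2))):ℕ) % 2 = 1 then wt d n x t k.succ.succ else 0)
      = ((if (k:ℕ) % 2 = 0 then 0 else x k) + (if (k:ℕ) % 2 = 0 then 0 else (1-t)))/(n+1) := by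
    intro k
    have hv : ((k.succ.succ : Fin (d+2)) : ℕ) = (k:ℕ) + 2 := rfl
    rw [hv, wt_succsucc]
    by_cases h : (k:ℕ) % 2 = 0
    · rw [if_neg (by omega), if_pos h, if_pos h]
      norm_num
    · rw [if_pos (by omega), if_neg h, if_neg h, if_neg h]
  rw [Finset.sum_congr rfl (fun k _ => key k), ← Finset.sum_div, Finset.sum_add_distrib,
    sum_fin_parity d n hd 0 (1-t)]
  rw [if_neg (show ¬((0 : Fin (d+2)):ℕ) % 2 = 1 by rw [hv0]; omega), if_pos (show (((0 : Fin (d+1)).succ : Fin (d+2)):ℕ) % 2 = 1 by rw [hv1])]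
  unfold wt
  rw [dif_neg (show ¬(((0 : Fin (d+1)).succ : Fin (d+2)):ℕ) = 0 by rw [hv1]; omega), dif_pos hv1, Fo_n]
  have heq : ∑ k : Fin d, (if (k:ℕ) % 2 = 1 then x k else 0)
      = ∑ k : Fin d, (if (k:ℕ) % 2 = 0 then 0 else x k) := by
    apply Finset.sum_congr rfl
    intro k _
    by_cases h : (k:ℕ) % 2 = 0
    · rw [if_neg (by omega), if_pos h]
    · rw [if_pos (by omega), if_neg h]
  rw [heq]
  have hnn : ((n:ℝ)+1) ≠ 0 := by positivity
  field_simp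
  ring

lemma wt_total (d n : ℕ) (hd : d = 2*n) (x : Fin d → ℝ) (t : ℝ) :
    ∑ ℓ : Fin (d+2), wt d n x t ℓ = 1 := by
  have key : ∀ ℓ : Fin (d+2), wt d n x t ℓ
      = (if (ℓ:ℕ) % 2 = 0 then wt d n x t ℓ else 0) + (if (ℓ:ℕ) % 2 = 1 then wt d n x t ℓ else 0) := by
    intro ℓ
    by_cases h : (ℓ:ℕ) % 2 = 0
    · rw [if_pos h, if_neg (by omega)]; ring
    · rw [if_neg h, if_pos (by omega)]; ring
  rw [Finset.sum_congr rfl (fun ℓ _ => key ℓ), Finset.sum_add_distrib,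
    wt_even_sum d n hd, wt_odd_sum d n hd]
  ring

lemma wt_comb (d n : ℕ) (hd : d = 2*n) (x : Fin d → ℝ) (t : ℝ) (k₀ : Fin d) :
    ∑ ℓ : Fin (d+2), wt d n x t ℓ * cvec d ℓ k₀ = x k₀ + 1 := by
  have hcv : ∀ ℓ : Fin (d+2), cvec d ℓ k₀
      = 1 + ((if (k₀:ℕ)+2 = (ℓ:ℕ) then ((n:ℝ)+1) else 0)
        + (if ((k₀:ℕ)+(ℓ:ℕ)) % 2 = 0 then (-1:ℝ) else 0)) := by
    intro ℓ
    have := cvec_sub_one d n hd ℓ k₀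
    linarith
  have key : ∀ ℓ : Fin (d+2), wt d n x t ℓ * cvec d ℓ k₀
      = wt d n x t ℓ
        + (if (k₀:ℕ)+2 = (ℓ:ℕ) then wt d n x t ℓ * ((n:ℝ)+1) else 0)
        + (-1) * (if ((k₀:ℕ)+(ℓ:ℕ)) % 2 = 0 then wt d n x t ℓ else 0) := by
    intro ℓ
    rw [hcv ℓ]
    split_ifs <;> ring
  rw [Finset.sum_congr rfl (fun ℓ _ => key ℓ), Finset.sum_add_distrib, Finset.sum_add_distrib,
    wt_total d n hd, ← Finset.mul_sum]
  have hℓ0 : ((k₀:ℕ)+2) < d+2 := by have := k₀.isLt; omega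
  have hspike : ∑ ℓ : Fin (d+2), (if (k₀:ℕ)+2 = (ℓ:ℕ) then wt d n x t ℓ * ((n:ℝ)+1) else 0)
      = x k₀ + (if (k₀:ℕ) % 2 = 0 then t else 1-t) := by
    rw [Finset.sum_eq_single (⟨(k₀:ℕ)+2, hℓ0⟩ : Fin (d+2))]
    · rw [if_pos rfl]
      have hℓv : ((⟨(k₀:ℕ)+2, hℓ0⟩ : Fin (d+2)) : ℕ) = (k₀:ℕ)+2 := rfl
      have hss : (⟨(k₀:ℕ)+2, hℓ0⟩ : Fin (d+2)) = k₀.succ.succ := by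
        apply Fin.ext; rfl
      rw [hss, wt_succsucc]
      have hnn : ((n:ℝ)+1) ≠ 0 := by positivity
      field_simp
    · intro ℓ _ hℓ
      rw [if_neg]
      intro hc
      exact hℓ (Fin.ext hc.symm)
    · simp
  rw [hspike]
  have hpar : ∑ ℓ : Fin (d+2), (if ((k₀:ℕ)+(ℓ:ℕ)) % 2 = 0 then wt d n x t ℓ else 0)
      = (if (k₀:ℕ) % 2 = 0 then t else 1-t) := by
    by_cases h : (k₀:ℕ) % 2 = 0
    · rw [if_pos h]
      refine Eq.trans ?_ (wt_even_sum d n hd x t)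
      apply Finset.sum_congr rfl
      intro ℓ _
      by_cases h2 : (ℓ:ℕ) % 2 = 0
      · rw [if_pos (by omega), if_pos h2]
      · rw [if_neg (by omega), if_neg h2]
    · rw [if_neg h]
      refine Eq.trans ?_ (wt_odd_sum d n hd x t)
      apply Finset.sum_congr rfl
      intro ℓ _
      by_cases h2 : (ℓ:ℕ) % 2 = 1
      · rw [if_pos (by omega), if_pos h2]
      · rw [if_neg (by omega), if_neg h2]
  rw [hpar]
  ring

lemma Fe_lt' (d n p : ℕ) (hp : p < n) (hd : d = 2*n) (x : Fin d → ℝ) (k : Fin d)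
    (hk : (k:ℕ) = 2*p) : Fe d n p x = -x k := by
  rw [Fe_lt d n p hp hd]
  exact congrArg (fun z => -x z) (Fin.ext hk.symm)

lemma Fo_lt' (d n q : ℕ) (hq : q < n) (hd : d = 2*n) (x : Fin d → ℝ) (k : Fin d)
    (hk : (k:ℕ) = 2*q+1) : Fo d n q x = -x k := by
  rw [Fo_lt d n q hq hd]
  exact congrArg (fun z => -x z) (Fin.ext hk.symm)

lemma wt_nonneg (d n : ℕ) (hd : d = 2*n) (x : Fin d → ℝ) (t : ℝ)
    (hFe : ∀ p : Fin (n+1), Fe d n (p:ℕ) x ≤ t)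
    (hFo : ∀ q : Fin (n+1), Fo d n (q:ℕ) x ≤ 1 - t) (ℓ : Fin (d+2)) :
    0 ≤ wt d n x t ℓ := by
  have hnn : (0:ℝ) < (n:ℝ)+1 := by positivity
  unfold wt
  split_ifs with h0 h1 hpar
  · have h' : Fe d n n x ≤ t := hFe ⟨n, by omega⟩
    apply div_nonneg _ hnn.le
    linarith
  · have h' : Fo d n n x ≤ 1 - t := hFo ⟨n, by omega⟩
    apply div_nonneg _ hnn.le
    linarith
  · have key : ∀ (k : Fin d), (k:ℕ) = (ℓ:ℕ)-2 → 0 ≤ (x k + t)/(n+1) := by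
      intro k hk
      set p : ℕ := ((ℓ:ℕ)-2)/2 with hp
      have hℓd : (ℓ:ℕ) < d+2 := ℓ.isLt
      have hple : p < n := by omega
      have h1 := Fe_lt' d n p hple hd x k (by omega)
      have h2 : Fe d n (↑(⟨p, by omega⟩ : Fin (n+1))) x ≤ t := hFe _
      have h3 : Fe d n p x ≤ t := h2
      rw [h1] at h3
      apply div_nonneg _ hnn.le
      linarith
    exact key _ rfl
  · have key : ∀ (k : Fin d), (k:ℕ) = (ℓ:ℕ)-2 → 0 ≤ (x k + (1-t))/(n+1) := by
      intro k hk
      set q : ℕ := ((ℓ:ℕ)-3)/2 with hq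
      have hℓd : (ℓ:ℕ) < d+2 := ℓ.isLt
      have hqle : q < n := by omega
      have h1 := Fo_lt' d n q hqle hd x k (by omega)
      have h2 : Fo d n (↑(⟨q, by omega⟩ : Fin (n+1))) x ≤ 1 - t := hFo _
      have h3 : Fo d n q x ≤ 1 - t := h2
      rw [h1] at h3
      apply div_nonneg _ hnn.le
      linarith
    exact key _ rfl

lemma pair_bound (d n : ℕ) (x : Fin d → ℝ)
    (hx : ∀ i : Fin ((n+1)*(n+1)), ∑ k, (Amat d n i k : ℝ) * x k ≤ 1)
    (p q : Fin (n+1)) : Fe d n (p:ℕ) x + Fo d n (q:ℕ) x ≤ 1 := by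
  have hi : (q:ℕ) + (p:ℕ)*(n+1) < (n+1)*(n+1) := by
    have h1 : (p:ℕ)+1 ≤ n+1 := p.isLt
    calc (q:ℕ) + (p:ℕ)*(n+1) < (n+1) + (p:ℕ)*(n+1) := by have := q.isLt; omega
    _ = ((p:ℕ)+1)*(n+1) := by ring
    _ ≤ (n+1)*(n+1) := Nat.mul_le_mul_right _ h1
  have h := hx ⟨(q:ℕ) + (p:ℕ)*(n+1), hi⟩
  rw [rowsum] at h
  have hdiv : ((q:ℕ) + (p:ℕ)*(n+1))/(n+1) = (p:ℕ) := by
    rw [Nat.add_mul_div_right _ _ (by omega : 0 < n+1), Nat.div_eq_of_lt q.isLt]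
    omega
  have hmod : ((q:ℕ) + (p:ℕ)*(n+1)) % (n+1) = (q:ℕ) := by
    rw [Nat.add_mul_mod_self_right, Nat.mod_eq_of_lt q.isLt]
  rw [show ((⟨(q:ℕ) + (p:ℕ)*(n+1), hi⟩ : Fin ((n+1)*(n+1))) : ℕ) = (q:ℕ) + (p:ℕ)*(n+1) from rfl,
    hdiv, hmod] at h
  exact h

lemma mem_hull (d n : ℕ) (hd : d = 2*n) (x : Fin d → ℝ)
    (hx : ∀ i : Fin ((n+1)*(n+1)), ∑ k, (Amat d n i k : ℝ) * x k ≤ 1) :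
    x + 1 ∈ convexHull ℝ (Set.range (cvec d)) := by
  have hpair := pair_bound d n x hx
  have hne : (Finset.univ : Finset (Fin (n+1))).Nonempty := ⟨0, Finset.mem_univ 0⟩
  set Ge := Finset.univ.sup' hne (fun p : Fin (n+1) => Fe d n (p:ℕ) x) with hGe
  set Go := Finset.univ.sup' hne (fun q : Fin (n+1) => Fo d n (q:ℕ) x) with hGo
  have hsum : Ge + Go ≤ 1 := by
    have : Ge ≤ 1 - Go := by
      apply Finset.sup'_le
      intro p _
      have : Go ≤ 1 - Fe d n (p:ℕ) x := by
        apply Finset.sup'_le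
        intro q _
        linarith [hpair p q]
      linarith
    linarith
  set t : ℝ := (1 + Ge - Go)/2 with ht
  have hFe : ∀ p : Fin (n+1), Fe d n (p:ℕ) x ≤ t := by
    intro p
    have h1 : Fe d n (p:ℕ) x ≤ Ge :=
      Finset.le_sup' (fun p : Fin (n+1) => Fe d n (p:ℕ) x) (Finset.mem_univ p)
    have h2 : Ge ≤ t := by rw [ht]; linarith
    linarith
  have hFo : ∀ q : Fin (n+1), Fo d n (q:ℕ) x ≤ 1 - t := by
    intro q
    have h1 : Fo d n (q:ℕ) x ≤ Go :=
      Finset.le_sup' (fun q : Fin (n+1) => Fo d n (q:ℕ) x) (Finset.mem_univ q)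
    have h2 : Go ≤ 1 - t := by rw [ht]; linarith
    linarith
  have h0 : ∀ ℓ ∈ (Finset.univ : Finset (Fin (d+2))), 0 ≤ wt d n x t ℓ :=
    fun ℓ _ => wt_nonneg d n hd x t hFe hFo ℓ
  have h1 : ∑ ℓ : Fin (d+2), wt d n x t ℓ = 1 := wt_total d n hd x t
  have hc := Finset.centerMass_mem_convexHull Finset.univ h0 (by rw [h1]; norm_num)
    (fun ℓ _ => Set.mem_range_self (f := cvec d) ℓ)
  have heq : Finset.univ.centerMass (wt d n x t) (cvec d) = x + 1 := by
    rw [Finset.centerMass, h1, inv_one, one_smul]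
    funext k
    rw [Finset.sum_apply]
    have : ∀ ℓ : Fin (d+2), (wt d n x t ℓ • cvec d ℓ) k = wt d n x t ℓ * cvec d ℓ k :=
      fun ℓ => rfl
    rw [Finset.sum_congr rfl (fun ℓ _ => this ℓ), wt_comb d n hd x t k]
    rfl
  rwa [heq] at hc

lemma ge_col_sum (d n : ℕ) (hd : d = 2*n) (k : Fin d) :
    ∑ p : Fin (n+1), ge' d n (p:ℕ) k = 0 := by
  by_cases hk : (k:ℕ) % 2 = 0
  · rw [Fin.sum_univ_castSucc]
    have hlast : ge' d n ((Fin.last n : Fin (n+1)):ℕ) k = 1 := by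
      unfold ge'
      rw [if_pos hk, if_pos (Fin.val_last n)]
    have hmain : ∑ i : Fin n, ge' d n ((Fin.castSucc i : Fin (n+1)):ℕ) k = -1 := by
      have hk2 : (k:ℕ)/2 < n := by have := k.isLt; omega
      rw [Finset.sum_eq_single (⟨(k:ℕ)/2, hk2⟩ : Fin n)]
      · have hiv : ((Fin.castSucc (⟨(k:ℕ)/2, hk2⟩ : Fin n) : Fin (n+1)):ℕ) = (k:ℕ)/2 := rfl
        unfold ge'
        rw [hiv, if_pos hk, if_neg (by omega), if_pos (by omega)]
      · intro i _ hi
        have hiv : ((Fin.castSucc i : Fin (n+1)):ℕ) = (i:ℕ) := rfl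
        have hne : (k:ℕ) ≠ 2*(i:ℕ) := by
          intro hc
          exact hi (Fin.ext (show ((i : Fin n):ℕ) = (k:ℕ)/2 by omega))
        unfold ge'
        rw [hiv, if_pos hk, if_neg (by have := i.isLt; omega), if_neg hne]
      · simp
    rw [hlast, hmain]
    ring
  · apply Finset.sum_eq_zero
    intro p _
    unfold ge'
    rw [if_neg hk]

lemma go_col_sum (d n : ℕ) (hd : d = 2*n) (k : Fin d) :
    ∑ q : Fin (n+1), go' d n (q:ℕ) k = 0 := by
  by_cases hk : (k:ℕ) % 2 = 1
  · rw [Fin.sum_univ_castSucc]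
    have hlast : go' d n ((Fin.last n : Fin (n+1)):ℕ) k = 1 := by
      unfold go'
      rw [if_pos hk, if_pos (Fin.val_last n)]
    have hmain : ∑ i : Fin n, go' d n ((Fin.castSucc i : Fin (n+1)):ℕ) k = -1 := by
      have hk2 : ((k:ℕ)-1)/2 < n := by have := k.isLt; omega
      rw [Finset.sum_eq_single (⟨((k:ℕ)-1)/2, hk2⟩ : Fin n)]
      · have hiv : ((Fin.castSucc (⟨((k:ℕ)-1)/2, hk2⟩ : Fin n) : Fin (n+1)):ℕ) = ((k:ℕ)-1)/2 := rfl
        unfold go'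
        rw [hiv, if_pos hk, if_neg (by omega), if_pos (by omega)]
      · intro i _ hi
        have hiv : ((Fin.castSucc i : Fin (n+1)):ℕ) = (i:ℕ) := rfl
        have hne : (k:ℕ) ≠ 2*(i:ℕ)+1 := by
          intro hc
          exact hi (Fin.ext (show ((i : Fin n):ℕ) = ((k:ℕ)-1)/2 by omega))
        unfold go'
        rw [hiv, if_pos hk, if_neg (by have := i.isLt; omega), if_neg hne]
      · simp
    rw [hlast, hmain]
    ring
  · apply Finset.sum_eq_zero
    intro q _
    unfold go'
    rw [if_neg hk]

lemma Fe_col_sum (d n : ℕ) (hd : d = 2*n) (z : Fin d → ℝ) :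
    ∑ p : Fin (n+1), Fe d n (p:ℕ) z = 0 := by
  unfold Fe
  rw [Finset.sum_comm]
  apply Finset.sum_eq_zero
  intro k _
  rw [← Finset.sum_mul]
  have h : ∑ p : Fin (n+1), (ge' d n (p:ℕ) k : ℝ) = 0 := by
    have := ge_col_sum d n hd k
    exact_mod_cast congrArg (Int.cast : ℤ → ℝ) this
  rw [h, zero_mul]

lemma Fo_col_sum (d n : ℕ) (hd : d = 2*n) (z : Fin d → ℝ) :
    ∑ q : Fin (n+1), Fo d n (q:ℕ) z = 0 := by
  unfold Fo
  rw [Finset.sum_comm]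
  apply Finset.sum_eq_zero
  intro k _
  rw [← Finset.sum_mul]
  have h : ∑ q : Fin (n+1), (go' d n (q:ℕ) k : ℝ) = 0 := by
    have := go_col_sum d n hd k
    exact_mod_cast congrArg (Int.cast : ℤ → ℝ) this
  rw [h, zero_mul]

lemma pair_bound' (d n : ℕ) (c : ℝ) (x : Fin d → ℝ)
    (hx : ∀ i : Fin ((n+1)*(n+1)), ∑ k, (Amat d n i k : ℝ) * x k ≤ c)
    (p q : Fin (n+1)) : Fe d n (p:ℕ) x + Fo d n (q:ℕ) x ≤ c := by
  have hi : (q:ℕ) + (p:ℕ)*(n+1) < (n+1)*(n+1) := by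
    have h1 : (p:ℕ)+1 ≤ n+1 := p.isLt
    calc (q:ℕ) + (p:ℕ)*(n+1) < (n+1) + (p:ℕ)*(n+1) := by have := q.isLt; omega
    _ = ((p:ℕ)+1)*(n+1) := by ring
    _ ≤ (n+1)*(n+1) := Nat.mul_le_mul_right _ h1
  have h := hx ⟨(q:ℕ) + (p:ℕ)*(n+1), hi⟩
  rw [rowsum] at h
  have hdiv : ((q:ℕ) + (p:ℕ)*(n+1))/(n+1) = (p:ℕ) := by
    rw [Nat.add_mul_div_right _ _ (by omega : 0 < n+1), Nat.div_eq_of_lt q.isLt]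
    omega
  have hmod : ((q:ℕ) + (p:ℕ)*(n+1)) % (n+1) = (q:ℕ) := by
    rw [Nat.add_mul_mod_self_right, Nat.mod_eq_of_lt q.isLt]
  rw [show ((⟨(q:ℕ) + (p:ℕ)*(n+1), hi⟩ : Fin ((n+1)*(n+1))) : ℕ) = (q:ℕ) + (p:ℕ)*(n+1) from rfl,
    hdiv, hmod] at h
  exact h

lemma strict_rows_zero (d n : ℕ) (hd : d = 2*n) (z : Fin d → ℝ)
    (hz : ∀ i : Fin ((n+1)*(n+1)), ∑ k, (Amat d n i k : ℝ) * z k ≤ 0) :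
    ∀ k : Fin d, z k = 0 := by
  have hpq := pair_bound' d n 0 z hz
  have hnp : (0:ℝ) < (n:ℝ)+1 := by positivity
  have hFo0 : ∀ q : Fin (n+1), Fo d n (q:ℕ) z ≤ 0 := by
    intro q
    have hs : ∑ p : Fin (n+1), (Fe d n (p:ℕ) z + Fo d n (q:ℕ) z) ≤ 0 := by
      calc ∑ p : Fin (n+1), (Fe d n (p:ℕ) z + Fo d n (q:ℕ) z)
          ≤ ∑ _p : Fin (n+1), (0:ℝ) := Finset.sum_le_sum (fun p _ => hpq p q)
      _ = 0 := by simp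
    rw [Finset.sum_add_distrib, Fe_col_sum d n hd, Finset.sum_const, Finset.card_univ,
      Fintype.card_fin, zero_add, nsmul_eq_mul] at hs
    push_cast at hs
    nlinarith
  have hFe0 : ∀ p : Fin (n+1), Fe d n (p:ℕ) z ≤ 0 := by
    intro p
    have hs : ∑ q : Fin (n+1), (Fe d n (p:ℕ) z + Fo d n (q:ℕ) z) ≤ 0 := by
      calc ∑ q : Fin (n+1), (Fe d n (p:ℕ) z + Fo d n (q:ℕ) z)
          ≤ ∑ _q : Fin (n+1), (0:ℝ) := Finset.sum_le_sum (fun q _ => hpq p q)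
      _ = 0 := by simp
    rw [Finset.sum_add_distrib, Fo_col_sum d n hd, Finset.sum_const, Finset.card_univ,
      Fintype.card_fin, add_zero, nsmul_eq_mul] at hs
    push_cast at hs
    nlinarith
  have hFeZ : ∀ p ∈ (Finset.univ : Finset (Fin (n+1))), Fe d n (p:ℕ) z = 0 :=
    (Finset.sum_eq_zero_iff_of_nonpos (fun p _ => hFe0 p)).mp (Fe_col_sum d n hd z)
  have hFoZ : ∀ q ∈ (Finset.univ : Finset (Fin (n+1))), Fo d n (q:ℕ) z = 0 :=
    (Finset.sum_eq_zero_iff_of_nonpos (fun q _ => hFo0 q)).mp (Fo_col_sum d n hd z)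
  intro k
  by_cases hk : (k:ℕ) % 2 = 0
  · have hp : (k:ℕ)/2 < n := by have := k.isLt; omega
    have h1 := Fe_lt' d n ((k:ℕ)/2) hp hd z k (by omega)
    have h2 : Fe d n ((k:ℕ)/2) z = 0 := hFeZ ⟨(k:ℕ)/2, by omega⟩ (Finset.mem_univ _)
    rw [h1] at h2
    linarith
  · have hq : ((k:ℕ)-1)/2 < n := by have := k.isLt; omega
    have h1 := Fo_lt' d n (((k:ℕ)-1)/2) hq hd z k (by omega)
    have h2 : Fo d n (((k:ℕ)-1)/2) z = 0 := hFoZ ⟨((k:ℕ)-1)/2, by omega⟩ (Finset.mem_univ _)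
    rw [h1] at h2
    linarith

lemma row_sq_pos (d n : ℕ) (hd : d = 2*n) (hn : 1 ≤ n) (i : Fin ((n+1)*(n+1))) :
    0 < ∑ k : Fin d, ((Amat d n i k : ℝ))^2 := by
  apply Finset.sum_pos'
  · intro k _; positivity
  · by_cases hp : (i:ℕ)/(n+1) = n
    · refine ⟨⟨0, by omega⟩, Finset.mem_univ _, ?_⟩
      have hA : Amat d n i ⟨0, by omega⟩ = 1 := by
        unfold Amat ge' go'
        have hv : ((⟨0, by omega⟩ : Fin d):ℕ) = 0 := rfl
        rw [hv, if_pos (by omega : 0 % 2 = 0), if_pos hp, if_neg (by omega : ¬(0 % 2 = 1))]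
        ring
      rw [hA]; norm_num
    · have hplt : (i:ℕ)/(n+1) < n := by
        have := Nat.div_lt_of_lt_mul i.isLt; omega
      refine ⟨⟨2*((i:ℕ)/(n+1)), by omega⟩, Finset.mem_univ _, ?_⟩
      have hA : Amat d n i ⟨2*((i:ℕ)/(n+1)), by omega⟩ = -1 := by
        unfold Amat ge' go'
        have hv : ((⟨2*((i:ℕ)/(n+1)), by omega⟩ : Fin d):ℕ) = 2*((i:ℕ)/(n+1)) := rfl
        rw [hv, if_pos (by omega), if_neg hp, if_pos rfl, if_neg (by omega)]
        ring
      rw [hA]; norm_num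

lemma image_eq (d n : ℕ) (hd : d = 2*n) :
    (fun x : Fin d → ℝ => x - 1) '' convexHull ℝ (Set.range (cvec d)) =
      {x : Fin d → ℝ | ∀ i : Fin ((n+1)*(n+1)), ∑ k, (Amat d n i k : ℝ) * x k ≤ 1} := by
  apply Set.Subset.antisymm
  · rintro w ⟨y, hy, rfl⟩
    have hsub : convexHull ℝ (Set.range (cvec d)) ⊆
        {y : Fin d → ℝ | ∀ i : Fin ((n+1)*(n+1)), ∑ k, (Amat d n i k : ℝ) * (y k - 1) ≤ 1} := by
      apply convexHull_min
      · rintro _ ⟨ℓ, rfl⟩ i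
        exact row_vert d n hd i ℓ
      · intro u hu v hv a b ha hb hab i
        have hexp : ∀ k : Fin d, (Amat d n i k : ℝ) * ((a • u + b • v) k - 1)
            = a * ((Amat d n i k : ℝ) * (u k - 1)) + b * ((Amat d n i k : ℝ) * (v k - 1)) := by
          intro k
          have h1 : (a • u + b • v) k = a * u k + b * v k := rfl
          rw [h1]
          linear_combination (Amat d n i k : ℝ) * hab
        rw [Finset.sum_congr rfl (fun k _ => hexp k), Finset.sum_add_distrib,
          ← Finset.mul_sum, ← Finset.mul_sum]
        have h1 := mul_le_mul_of_nonneg_left (hu i) ha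
        have h2 := mul_le_mul_of_nonneg_left (hv i) hb
        linarith
    intro i
    exact hsub hy i
  · intro x hx
    refine ⟨x + 1, mem_hull d n hd x hx, ?_⟩
    funext k
    show (x + 1) k - 1 = x k
    simp

lemma interior_eq (d n : ℕ) (hd : d = 2*n) (hn : 1 ≤ n) :
    interior {x : Fin d → ℝ | ∀ i : Fin ((n+1)*(n+1)), ∑ k, (Amat d n i k : ℝ) * x k ≤ 1}
      = {x : Fin d → ℝ | ∀ i : Fin ((n+1)*(n+1)), ∑ k, (Amat d n i k : ℝ) * x k < 1} := by
  apply Set.Subset.antisymm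
  · intro x hx i
    set g : Fin d → ℝ := fun k => (Amat d n i k : ℝ) with hg
    have hB := row_sq_pos d n hd hn i
    have hcont : Continuous (fun s : ℝ => x + s • g) :=
      continuous_const.add (continuous_id.smul continuous_const)
    have hopen : IsOpen ((fun s : ℝ => x + s • g) ⁻¹'
        interior {x : Fin d → ℝ | ∀ i : Fin ((n+1)*(n+1)), ∑ k, (Amat d n i k : ℝ) * x k ≤ 1}) :=
      isOpen_interior.preimage hcont
    have h0 : (0:ℝ) ∈ (fun s : ℝ => x + s • g) ⁻¹'
        interior {x : Fin d → ℝ | ∀ i : Fin ((n+1)*(n+1)), ∑ k, (Amat d n i k : ℝ) * x k ≤ 1} := by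
      simp only [Set.mem_preimage, zero_smul, add_zero]
      exact hx
    obtain ⟨ε, hε, hball⟩ := Metric.isOpen_iff.mp hopen 0 h0
    have hs : (ε/2) ∈ Metric.ball (0:ℝ) ε := by
      rw [Metric.mem_ball, Real.dist_eq, sub_zero, abs_of_pos (by linarith)]
      linarith
    have hmem := interior_subset (hball hs)
    have hrow := hmem i
    have hexp : ∑ k, (Amat d n i k : ℝ) * ((x + (ε/2) • g) k)
        = (∑ k, (Amat d n i k : ℝ) * x k) + (ε/2) * ∑ k, (Amat d n i k : ℝ)^2 := by
      rw [Finset.mul_sum, ← Finset.sum_add_distrib]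
      apply Finset.sum_congr rfl
      intro k _
      have h1 : (x + (ε/2) • g) k = x k + (ε/2) * g k := rfl
      rw [h1, hg]
      ring
    rw [hexp] at hrow
    nlinarith
  · intro x hx
    have hopen : IsOpen {x : Fin d → ℝ | ∀ i : Fin ((n+1)*(n+1)), ∑ k, (Amat d n i k : ℝ) * x k < 1} := by
      have heq : {x : Fin d → ℝ | ∀ i : Fin ((n+1)*(n+1)), ∑ k, (Amat d n i k : ℝ) * x k < 1}
          = ⋂ i : Fin ((n+1)*(n+1)), {x : Fin d → ℝ | ∑ k, (Amat d n i k : ℝ) * x k < 1} := by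
        ext w; simp [Set.mem_iInter]
      rw [heq]
      apply isOpen_iInter_of_finite
      intro i
      exact isOpen_lt (continuous_finset_sum _
        (fun k _ => continuous_const.mul (continuous_apply k))) continuous_const
    have hsub : {x : Fin d → ℝ | ∀ i : Fin ((n+1)*(n+1)), ∑ k, (Amat d n i k : ℝ) * x k < 1}
        ⊆ {x : Fin d → ℝ | ∀ i : Fin ((n+1)*(n+1)), ∑ k, (Amat d n i k : ℝ) * x k ≤ 1} := by
      intro y hy i
      exact le_of_lt (hy i)
    exact interior_maximal hsub hopen hx

end S17

/-- for even `d ≥ 2`, the translate `Q − 𝟙` of the interior polytope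
`Q = conv(c^{(1)},…,c^{(d+2)})` is reflexive, i.e. of the form `{x : Ax ≤ 𝟙}` for an
integer matrix `A`; in particular `𝟙` is the unique interior lattice point of
`Q`. -/
theorem stmt17 (d : ℕ) (hd : 2 ≤ d) (he : Even d) :
    (∃ (m : ℕ) (A : Fin m → Fin d → ℤ),
      (fun x : Fin d → ℝ => x - 1) '' convexHull ℝ (Set.range (cvec d)) =
        {x | ∀ i, ∑ k, (A i k : ℝ) * x k ≤ 1}) ∧
    {y : Fin d → ℤ |
        (fun k => (y k : ℝ)) ∈ interior (convexHull ℝ (Set.range (cvec d)))} =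
      {fun _ => 1} := by
  obtain ⟨n, hn2⟩ := he
  have hdn : d = 2*n := by omega
  have hn1 : 1 ≤ n := by omega
  refine ⟨⟨(n+1)*(n+1), S17.Amat d n, S17.image_eq d n hdn⟩, ?_⟩
  have hHull : convexHull ℝ (Set.range (cvec d))
      = (fun x : Fin d → ℝ => x + 1) ''
        {x : Fin d → ℝ | ∀ i : Fin ((n+1)*(n+1)), ∑ k, (S17.Amat d n i k : ℝ) * x k ≤ 1} := by
    rw [← S17.image_eq d n hdn]
    ext z
    constructor
    · intro hz
      refine ⟨z - 1, ⟨z, hz, rfl⟩, ?_⟩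
      funext k
      show z k - 1 + 1 = z k
      ring
    · rintro ⟨w, ⟨u, hu, rfl⟩, rfl⟩
      have huu : (fun x : Fin d → ℝ => x + 1) ((fun x : Fin d → ℝ => x - 1) u) = u := by
        funext k
        show u k - 1 + 1 = u k
        ring
      rw [huu]
      exact hu
  have hint : interior (convexHull ℝ (Set.range (cvec d)))
      = (fun x : Fin d → ℝ => x + 1) ''
        {x : Fin d → ℝ | ∀ i : Fin ((n+1)*(n+1)), ∑ k, (S17.Amat d n i k : ℝ) * x k < 1} := by
    rw [hHull]
    have h1 : (fun x : Fin d → ℝ => x + 1) = ⇑(Homeomorph.addRight (1 : Fin d → ℝ)) := rfl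
    rw [h1, ← Homeomorph.image_interior, S17.interior_eq d n hdn hn1]
  ext y
  simp only [Set.mem_setOf_eq, Set.mem_singleton_iff]
  rw [hint]
  constructor
  · rintro ⟨z, hz, hzeq⟩
    have hzk : ∀ k, z k = (y k : ℝ) - 1 := by
      intro k
      have h2 : z k + 1 = (y k : ℝ) := congrFun hzeq k
      linarith
    have hintrow : ∀ i : Fin ((n+1)*(n+1)), ∑ k, (S17.Amat d n i k : ℝ) * z k ≤ 0 := by
      intro i
      have h1 := hz i
      have h2 : ∑ k, (S17.Amat d n i k : ℝ) * z k
          = ((∑ k, S17.Amat d n i k * (y k - 1) : ℤ) : ℝ) := by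
        push_cast
        apply Finset.sum_congr rfl
        intro k _
        rw [hzk k]
      rw [h2] at h1 ⊢
      have h3 : (∑ k, S17.Amat d n i k * (y k - 1) : ℤ) < 1 := by exact_mod_cast h1
      exact_mod_cast (by omega : (∑ k, S17.Amat d n i k * (y k - 1) : ℤ) ≤ 0)
    have hz0 := S17.strict_rows_zero d n hdn z hintrow
    funext k
    have hk0 := hz0 k
    rw [hzk k] at hk0
    have : (y k : ℝ) = 1 := by linarith
    exact_mod_cast this
  · rintro rfl
    refine ⟨0, ?_, ?_⟩
    · intro i
      have h0 : ∀ k : Fin d, (S17.Amat d n i k : ℝ) * (0 : Fin d → ℝ) k = 0 := by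
        intro k; show (S17.Amat d n i k : ℝ) * 0 = 0; ring
      rw [Finset.sum_congr rfl (fun k _ => h0 k), Finset.sum_const, smul_zero]
      norm_num
    · funext k
      show (0 : Fin d → ℝ) k + 1 = ((1:ℤ):ℝ)
      norm_num
end
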